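/- arXiv:2001.10679 — 7 statements merged into one kernel-verified Lean document; each statement's English description precedes it below -/
import Mathlib

section
/- For any integer s ≥ 1 and any constant c > 0, the set B₁(c√s) ∩ B₂(1) ⊆ ℝⁿ is contained in (1+c) times the closed convex hull of B₀(s) ∩ B₂(1). -/
open Pointwise

/-!
By Hahn–Banach it suffices to compare support functions: for every `y` we need an `s`-sparse
unit vector `a` with `⟪y, x⟫ ≤ (1 + c) ⟪y, a⟫`. Let `S` index the `s` largest `|yᵢ|` and take
`a = y_S / ‖y_S‖`, so that `⟪y, a⟫ = ‖y_S‖`. Off `S` every `|yᵢ|` is at most `‖y_S‖ / √s`, hence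
Cauchy–Schwarz on `S` and Hölder off `S` give
`⟪y, x⟫ ≤ ‖y_S‖ ‖x‖₂ + ‖y_S‖ ‖x‖₁ / √s ≤ (1 + c) ‖y_S‖`.
-/

theorem mem_closure_convexHull_of_forall_exists_le {E : Type*} [TopologicalSpace E]
    [AddCommGroup E] [Module ℝ E] [IsTopologicalAddGroup E] [ContinuousSMul ℝ E]
    [LocallyConvexSpace ℝ E] {K : Set E} {x : E}
    (h : ∀ l : StrongDual ℝ E, ∃ a ∈ K, l x ≤ l a) : x ∈ closure (convexHull ℝ K) := by
  rw [← iInter_halfSpaces_eq (convex_convexHull ℝ K).closure isClosed_closure]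
  refine Set.mem_iInter.2 fun l => ?_
  obtain ⟨a, ha, hxa⟩ := h l
  exact ⟨a, subset_closure (subset_convexHull ℝ K ha), hxa⟩

/-- `S` collects `k` largest values of `g`, or all of `ι` if it has fewer than `k` points. -/
theorem Finset.exists_card_le_forall_notMem_le {ι α : Type*} [Fintype ι] [LinearOrder α]
    (g : ι → α) (k : ℕ) :
    ∃ S : Finset ι, S.card ≤ k ∧ ∀ i ∉ S, S.card = k ∧ ∀ j ∈ S, g i ≤ g j := by
  classical
  induction k with
  | zero => exact ⟨∅, by simp, fun i _ => ⟨by simp, by simp⟩⟩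
  | succ k ih =>
    obtain ⟨S, hSk, hS⟩ := ih
    obtain hSc | ⟨i₀, hi₀⟩ := Sᶜ.eq_empty_or_nonempty
    · refine ⟨S, by omega, fun i hi => (hi ?_).elim⟩
      exact (Finset.compl_eq_empty_iff S).1 hSc ▸ Finset.mem_univ i
    obtain ⟨m, hm, hmax⟩ := Sᶜ.exists_max_image g ⟨i₀, hi₀⟩
    have hmS : m ∉ S := Finset.mem_compl.1 hm
    have hcard : (insert m S).card = k + 1 := by
      rw [Finset.card_insert_of_notMem hmS, (hS i₀ (Finset.mem_compl.1 hi₀)).1]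
    refine ⟨insert m S, hcard.le, fun i hi => ⟨hcard, fun j hj => ?_⟩⟩
    rw [Finset.mem_insert, not_or] at hi
    obtain rfl | hjS := Finset.mem_insert.1 hj
    · exact hmax i (Finset.mem_compl.2 hi.2)
    · exact (hS i hi.2).2 j hjS

theorem sqrt_card_mul_abs_le_sqrt_sum_sq {ι : Type*} {S : Finset ι} {y : ι → ℝ} {i : ι}
    (h : ∀ j ∈ S, |y i| ≤ |y j|) : √(S.card : ℝ) * |y i| ≤ √(∑ j ∈ S, y j ^ 2) := by
  rw [← Real.sqrt_sq_eq_abs, ← Real.sqrt_mul (Nat.cast_nonneg _), ← nsmul_eq_mul]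
  exact Real.sqrt_le_sqrt (Finset.card_nsmul_le_sum _ _ _ fun j hj => sq_le_sq.2 (h j hj))

section EuclideanSpace

variable {ι : Type*} [Fintype ι]

theorem exists_norm_le_one_inner_eq_sqrt_sum_sq (y : EuclideanSpace ℝ ι) (S : Finset ι) :
    ∃ a : EuclideanSpace ℝ ι,
      (∀ i ∉ S, a i = 0) ∧ ‖a‖ ≤ 1 ∧ inner ℝ y a = √(∑ i ∈ S, y i ^ 2) := by
  classical
  set v : EuclideanSpace ℝ ι := WithLp.toLp 2 fun i => if i ∈ S then y i else 0
  have hv : ‖v‖ = √(∑ i ∈ S, y i ^ 2) := by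
    simp [EuclideanSpace.norm_eq, v, apply_ite (· ^ 2), Finset.sum_ite_mem]
  have hyv : inner ℝ y v = ‖v‖ ^ 2 := by
    rw [EuclideanSpace.real_norm_sq_eq]
    simp [PiLp.inner_apply, v, ite_pow, Finset.sum_ite_mem, sq]
  -- `‖v‖⁻¹ = 0` when `v = 0`, so `a = 0` covers that case without a split.
  refine ⟨‖v‖⁻¹ • v, fun i hi => by simp [v, hi], ?_, ?_⟩
  · rw [norm_smul, norm_inv, norm_norm]
    exact inv_mul_le_one_of_le₀ le_rfl (norm_nonneg _)
  · rw [inner_smul_right, hyv, ← hv, sq, inv_mul_eq_div, mul_self_div_self]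

theorem inner_le_of_sum_abs_le_of_norm_le_one {x y : EuclideanSpace ℝ ι} {S : Finset ι} {s c : ℝ}
    (hs : 0 < s) (hx₁ : ∑ i, |x i| ≤ c * √s) (hx₂ : ‖x‖ ≤ 1)
    (hy : ∀ i ∉ S, √s * |y i| ≤ √(∑ j ∈ S, y j ^ 2)) :
    inner ℝ y x ≤ (1 + c) * √(∑ j ∈ S, y j ^ 2) := by
  classical
  set A := √(∑ j ∈ S, y j ^ 2)
  have hS : ∑ i ∈ S, y i * x i ≤ A := calc
    ∑ i ∈ S, y i * x i ≤ A * √(∑ i ∈ S, x i ^ 2) := Real.sum_mul_le_sqrt_mul_sqrt S _ _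
    _ ≤ A * ‖x‖ := by
      rw [EuclideanSpace.norm_eq]
      simp only [Real.norm_eq_abs, sq_abs]
      gcongr
      exact S.subset_univ
    _ ≤ A := mul_le_of_le_one_right (Real.sqrt_nonneg _) hx₂
  have hSc : ∑ i ∈ Sᶜ, y i * x i ≤ c * A := by
    refine le_of_mul_le_mul_left ?_ (Real.sqrt_pos.2 hs)
    calc
      √s * ∑ i ∈ Sᶜ, y i * x i ≤ ∑ i ∈ Sᶜ, A * |x i| := by
        rw [Finset.mul_sum]
        refine Finset.sum_le_sum fun i hi => ?_
        calc √s * (y i * x i) ≤ √s * |y i| * |x i| := by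
              rw [mul_assoc, ← abs_mul]
              gcongr
              exact le_abs_self _
          _ ≤ A * |x i| := by gcongr; exact hy i (Finset.mem_compl.1 hi)
      _ ≤ A * (c * √s) := by
        rw [← Finset.mul_sum]
        gcongr
        exact (Finset.sum_le_univ_sum_of_nonneg fun i => abs_nonneg _).trans hx₁
      _ = √s * (c * A) := by ring
  rw [PiLp.inner_apply, ← Finset.sum_add_sum_compl S]
  simp only [RCLike.inner_apply, conj_trivial, mul_comm (x _)]
  linarith

end EuclideanSpace

/-- For any integer `s ≥ 1` and constant `c > 0`, the intersection of the ℓ₁-ball of radius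
`c√s` with the ℓ₂-unit ball is contained in `(1+c)` times the closed convex hull of the set of
`s`-sparse vectors in the ℓ₂-unit ball. -/
theorem l1_inter_l2_ball_subset (n : ℕ) (s : ℕ) (hs : 1 ≤ s) (c : ℝ) (hc : 0 < c) :
    {x : EuclideanSpace ℝ (Fin n) | ∑ i, |x i| ≤ c * Real.sqrt s} ∩ {x | ‖x‖ ≤ 1}
      ⊆ (1 + c) • closure (convexHull ℝ
          ({x : EuclideanSpace ℝ (Fin n) | Set.ncard {i | x i ≠ 0} ≤ s} ∩ {x | ‖x‖ ≤ 1})) := by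
  rintro x ⟨hx₁, hx₂⟩
  have hc₁ : 0 < 1 + c := by linarith
  rw [Set.mem_smul_set_iff_inv_smul_mem₀ hc₁.ne']
  refine mem_closure_convexHull_of_forall_exists_le fun l => ?_
  set y := (InnerProductSpace.toDual ℝ _).symm l
  obtain ⟨S, hSs, hS⟩ := Finset.exists_card_le_forall_notMem_le (fun i => |y i|) s
  obtain ⟨a, haS, ha₁, hya⟩ := exists_norm_le_one_inner_eq_sqrt_sum_sq y S
  have hsupp : {i | a i ≠ 0} ⊆ S := fun i hi => by_contra fun h => hi (haS i h)
  refine ⟨a, ⟨(Set.ncard_le_ncard hsupp S.finite_toSet).trans (by simpa using hSs), ha₁⟩, ?_⟩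
  rw [← InnerProductSpace.toDual_symm_apply, ← InnerProductSpace.toDual_symm_apply,
    inner_smul_right, hya, inv_mul_le_iff₀ hc₁]
  exact inner_le_of_sum_abs_le_of_norm_le_one (Nat.cast_pos.2 hs) hx₁ hx₂ fun i hi => by
    simpa [(hS i hi).1] using sqrt_card_mul_abs_le_sqrt_sum_sq (hS i hi).2
end

section
/- Let Γ ∈ ℝ^{n×n} be a symmetric matrix, s ≥ 1 an integer, and δ > 0. Suppose |vᵀΓv| ≤ δ for all v with ‖v‖₀ ≤ 2s and ‖v‖₂ ≤ 1. Then |vᵀΓv| ≤ 75δ‖v‖₂² for all v with ‖v‖₁ ≤ 4√s‖v‖₂. -/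
/-!
Split the support of `v` into consecutive blocks of `s` coordinates, taken in decreasing order of
`|v i|`. Every entry of a later block is at most the average of the previous block, so the
`ℓ₂`-norm of that block is at most `1/√s` times the `ℓ₁`-norm of the previous one; hence the block
norms sum to at most `‖v‖₂ + ‖v‖₁ / √s ≤ 5 ‖v‖₂` on the cone. Polarization turns the hypothesis on
`2s`-sparse vectors into `|xᵀΓy| ≤ δ ‖x‖₂ ‖y‖₂` for `s`-sparse `x, y`, and expanding `vᵀΓv` over
the blocks gives `|vᵀΓv| ≤ δ (∑ ‖v_j‖₂)² ≤ 25 δ ‖v‖₂²`.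
-/

open Matrix Function

lemma Finset.exists_subset_card_eq_forall_sdiff_le {β α : Type*} [DecidableEq β] [LinearOrder α]
    (f : β → α) (S : Finset β) {k : ℕ} (hk : k ≤ S.card) :
    ∃ T ⊆ S, T.card = k ∧ ∀ i ∈ T, ∀ j ∈ S \ T, f j ≤ f i := by
  induction k with
  | zero => exact ⟨∅, by simp⟩
  | succ k ih =>
    obtain ⟨T, hTS, hTcard, hTtop⟩ := ih (by omega)
    have hne : (S \ T).Nonempty := by
      rw [← Finset.card_pos, Finset.card_sdiff_of_subset hTS]; omega
    obtain ⟨j₀, hj₀, hj₀max⟩ := Finset.exists_max_image (S \ T) f hne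
    rw [Finset.mem_sdiff] at hj₀
    refine ⟨insert j₀ T, Finset.insert_subset hj₀.1 hTS,
      by rw [Finset.card_insert_of_notMem hj₀.2, hTcard], fun i hi j hj => ?_⟩
    have hj' : j ∈ S \ T := Finset.sdiff_subset_sdiff le_rfl (Finset.subset_insert _ _) hj
    rcases Finset.mem_insert.1 hi with rfl | hiT
    · exact hj₀max j hj'
    · exact hTtop i hiT j hj'

variable {ι : Type*} [Fintype ι]

def l1norm (v : ι → ℝ) : ℝ := ∑ i, |v i|

noncomputable def l2norm (v : ι → ℝ) : ℝ := √(∑ i, v i ^ 2)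

lemma l1norm_nonneg (v : ι → ℝ) : 0 ≤ l1norm v := Finset.sum_nonneg fun _ _ => abs_nonneg _

lemma l2norm_nonneg (v : ι → ℝ) : 0 ≤ l2norm v := Real.sqrt_nonneg _

lemma sq_l2norm (v : ι → ℝ) : l2norm v ^ 2 = ∑ i, v i ^ 2 :=
  Real.sq_sqrt (Finset.sum_nonneg fun _ _ => sq_nonneg _)

@[simp]
lemma l2norm_zero : l2norm (0 : ι → ℝ) = 0 := by simp [l2norm]

lemma l2norm_eq_zero_iff {v : ι → ℝ} : l2norm v = 0 ↔ v = 0 := by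
  rw [l2norm, Real.sqrt_eq_zero (Finset.sum_nonneg fun _ _ => sq_nonneg _),
    Finset.sum_eq_zero_iff_of_nonneg fun _ _ => sq_nonneg _, funext_iff]
  simp

lemma l2norm_smul (c : ℝ) (v : ι → ℝ) : l2norm (c • v) = |c| * l2norm v := by
  simp only [l2norm, Pi.smul_apply, smul_eq_mul, mul_pow, ← Finset.mul_sum]
  rw [Real.sqrt_mul (sq_nonneg c), Real.sqrt_sq_eq_abs]

lemma l2norm_add_sq_add_l2norm_sub_sq (x y : ι → ℝ) :
    l2norm (x + y) ^ 2 + l2norm (x - y) ^ 2 = 2 * (l2norm x ^ 2 + l2norm y ^ 2) := by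
  simp only [sq_l2norm, Pi.add_apply, Pi.sub_apply, ← Finset.sum_add_distrib, Finset.mul_sum]
  exact Finset.sum_congr rfl fun i _ => by ring

lemma l2norm_indicator_le (T : Set ι) (v : ι → ℝ) : l2norm (T.indicator v) ≤ l2norm v := by
  refine Real.sqrt_le_sqrt (Finset.sum_le_sum fun i _ => ?_)
  by_cases hi : i ∈ T <;> simp [hi, sq_nonneg]

lemma l2norm_le_of_abs_le {v : ι → ℝ} {m : ℝ} {k : ℕ} (hm : 0 ≤ m) (hv : ∀ i, |v i| ≤ m)
    (hk : (support v).ncard ≤ k) : l2norm v ≤ √k * m := by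
  classical
  have hsum : ∑ i, v i ^ 2 ≤ k * m ^ 2 := calc
    ∑ i, v i ^ 2 = ∑ i ∈ (support v).toFinset, v i ^ 2 :=
      (Finset.sum_subset (Finset.subset_univ _) fun i _ hi => by simp_all).symm
    _ ≤ ∑ _i ∈ (support v).toFinset, m ^ 2 :=
      Finset.sum_le_sum fun i _ => sq_le_sq' (abs_le.1 (hv i)).1 (abs_le.1 (hv i)).2
    _ ≤ k * m ^ 2 := by
      rw [Finset.sum_const, nsmul_eq_mul, ← Set.ncard_eq_toFinset_card']
      gcongr
  calc l2norm v ≤ √(k * m ^ 2) := Real.sqrt_le_sqrt hsum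
    _ = √k * m := by rw [Real.sqrt_mul (Nat.cast_nonneg k), Real.sqrt_sq hm]

lemma l1norm_indicator (T : Finset ι) (v : ι → ℝ) :
    l1norm ((T : Set ι).indicator v) = ∑ j ∈ T, |v j| := by
  rw [← Finset.sum_indicator_subset _ (Finset.subset_univ T), l1norm]
  exact Finset.sum_congr rfl fun i _ => by by_cases hi : i ∈ T <;> simp [hi]

lemma l1norm_indicator_add_indicator_compl (T : Set ι) (v : ι → ℝ) :
    l1norm (T.indicator v) + l1norm (Tᶜ.indicator v) = l1norm v := by
  simp only [l1norm, ← Finset.sum_add_distrib]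
  exact Finset.sum_congr rfl fun i _ => by by_cases hi : i ∈ T <;> simp [hi]

lemma ncard_support_add_le (x y : ι → ℝ) :
    (support (x + y)).ncard ≤ (support x).ncard + (support y).ncard :=
  (Set.ncard_le_ncard (support_add x y)).trans (Set.ncard_union_le _ _)

lemma ncard_support_smul_le (c : ℝ) (x : ι → ℝ) : (support (c • x)).ncard ≤ (support x).ncard :=
  Set.ncard_le_ncard (support_const_smul_subset c x)

lemma ncard_support_indicator_le (T : Finset ι) (v : ι → ℝ) :
    (support ((T : Set ι).indicator v)).ncard ≤ T.card := by
  rw [Set.support_indicator, ← Set.ncard_coe_finset]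
  exact Set.ncard_le_ncard Set.inter_subset_left

lemma Matrix.IsSymm.dotProduct_mulVec_comm {Γ : Matrix ι ι ℝ} (hΓ : Γ.IsSymm) (x y : ι → ℝ) :
    y ⬝ᵥ Γ *ᵥ x = x ⬝ᵥ Γ *ᵥ y := by
  rw [dotProduct_mulVec, ← mulVec_transpose, hΓ.eq, dotProduct_comm]

lemma Matrix.IsSymm.four_mul_dotProduct_mulVec {Γ : Matrix ι ι ℝ} (hΓ : Γ.IsSymm) (x y : ι → ℝ) :
    4 * (x ⬝ᵥ Γ *ᵥ y) = (x + y) ⬝ᵥ Γ *ᵥ (x + y) - (x - y) ⬝ᵥ Γ *ᵥ (x - y) := by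
  simp only [mulVec_add, mulVec_sub, dotProduct_add, dotProduct_sub, add_dotProduct,
    sub_dotProduct, hΓ.dotProduct_mulVec_comm x y]
  ring

def SparseQuadBound (Γ : Matrix ι ι ℝ) (k : ℕ) (δ : ℝ) : Prop :=
  ∀ w : ι → ℝ, (support w).ncard ≤ k → l2norm w ≤ 1 → |w ⬝ᵥ Γ *ᵥ w| ≤ δ

namespace SparseQuadBound

variable {Γ : Matrix ι ι ℝ} {δ : ℝ}

lemma abs_dotProduct_mulVec_self_le {k : ℕ} (h : SparseQuadBound Γ k δ) {w : ι → ℝ}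
    (hw : (support w).ncard ≤ k) : |w ⬝ᵥ Γ *ᵥ w| ≤ δ * l2norm w ^ 2 := by
  rcases eq_or_ne w 0 with rfl | hw0
  · simp
  set c := l2norm w
  have hc : 0 < c := (l2norm_nonneg w).lt_of_ne' (l2norm_eq_zero_iff.not.2 hw0)
  have hunit := h (c⁻¹ • w)
    (by rwa [support_const_smul_of_ne_zero _ _ (inv_ne_zero hc.ne')])
    (by rw [l2norm_smul, abs_inv, abs_of_pos hc, inv_mul_cancel₀ hc.ne'])
  rw [mulVec_smul, dotProduct_smul, smul_dotProduct, smul_eq_mul, smul_eq_mul, abs_mul,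
    abs_mul, abs_inv, abs_of_pos hc, ← mul_assoc, ← sq, inv_pow, inv_mul_le_iff₀ (by positivity)]
    at hunit
  linarith

variable {s : ℕ}

lemma abs_dotProduct_mulVec_le_mean_sq (h : SparseQuadBound Γ (2 * s) δ) (hΓ : Γ.IsSymm)
    {x y : ι → ℝ} (hx : (support x).ncard ≤ s) (hy : (support y).ncard ≤ s) :
    |x ⬝ᵥ Γ *ᵥ y| ≤ δ / 2 * (l2norm x ^ 2 + l2norm y ^ 2) := by
  have hadd := h.abs_dotProduct_mulVec_self_le (w := x + y)
    ((ncard_support_add_le x y).trans (by omega))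
  have hsub := h.abs_dotProduct_mulVec_self_le (w := x - y)
    (by rw [sub_eq_add_neg]; exact (ncard_support_add_le x (-y)).trans (by rw [support_neg]; omega))
  have hpol := congrArg abs (hΓ.four_mul_dotProduct_mulVec x y)
  rw [abs_mul, abs_of_pos four_pos] at hpol
  have hpar := congrArg (δ * ·) (l2norm_add_sq_add_l2norm_sub_sq x y)
  simp only [mul_add] at hpar
  linarith [abs_sub ((x + y) ⬝ᵥ Γ *ᵥ (x + y)) ((x - y) ⬝ᵥ Γ *ᵥ (x - y))]

lemma abs_dotProduct_mulVec_le (h : SparseQuadBound Γ (2 * s) δ) (hΓ : Γ.IsSymm)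
    {x y : ι → ℝ} (hx : (support x).ncard ≤ s) (hy : (support y).ncard ≤ s) :
    |x ⬝ᵥ Γ *ᵥ y| ≤ δ * l2norm x * l2norm y := by
  set p := l2norm x * l2norm y
  rcases (mul_nonneg (l2norm_nonneg x) (l2norm_nonneg y)).eq_or_lt' with hp | hp
  · rcases mul_eq_zero.1 hp with hx0 | hy0
    · simp [l2norm_eq_zero_iff.1 hx0]
    · simp [l2norm_eq_zero_iff.1 hy0]
  -- both rescaled vectors have norm `p`, which makes the mean of the squares equal to `p ^ 2`
  have hscaled := h.abs_dotProduct_mulVec_le_mean_sq hΓ (x := l2norm y • x) (y := l2norm x • y)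
    ((ncard_support_smul_le _ x).trans hx) ((ncard_support_smul_le _ y).trans hy)
  rw [mulVec_smul, dotProduct_smul, smul_dotProduct, smul_eq_mul, smul_eq_mul, l2norm_smul,
    l2norm_smul, abs_of_nonneg (l2norm_nonneg x), abs_of_nonneg (l2norm_nonneg y), abs_mul,
    abs_mul, abs_of_nonneg (l2norm_nonneg x), abs_of_nonneg (l2norm_nonneg y)] at hscaled
  have : p * |x ⬝ᵥ Γ *ᵥ y| ≤ p * (δ * p) := by linarith
  rw [mul_assoc]
  exact le_of_mul_le_mul_left this hp

lemma abs_dotProduct_mulVec_sum_le (h : SparseQuadBound Γ (2 * s) δ) (hΓ : Γ.IsSymm)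
    {κ : Type*} [Fintype κ] {u : κ → ι → ℝ} (hu : ∀ j, (support (u j)).ncard ≤ s) :
    |(∑ j, u j) ⬝ᵥ Γ *ᵥ ∑ j, u j| ≤ δ * (∑ j, l2norm (u j)) ^ 2 := by
  rw [mulVec_sum, dotProduct_sum]
  calc |∑ k, (∑ j, u j) ⬝ᵥ Γ *ᵥ u k| ≤ ∑ k, ∑ j, |u j ⬝ᵥ Γ *ᵥ u k| := by
        refine (Finset.abs_sum_le_sum_abs _ _).trans (Finset.sum_le_sum fun k _ => ?_)
        rw [sum_dotProduct]
        exact Finset.abs_sum_le_sum_abs _ _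
    _ ≤ ∑ k, ∑ j, δ * l2norm (u j) * l2norm (u k) := by
        gcongr with k _ j _
        exact h.abs_dotProduct_mulVec_le hΓ (hu j) (hu k)
    _ = δ * (∑ j, l2norm (u j)) ^ 2 := by
        simp only [sq, Finset.mul_sum, Finset.sum_mul, mul_assoc]

end SparseQuadBound

lemma exists_top_block {s : ℕ} (hs : 0 < s) (v : ι → ℝ) :
    ∃ T : Finset ι, T.card = min s (support v).ncard ∧ ↑T ⊆ support v ∧
      ∀ i, |(↑T : Set ι)ᶜ.indicator v i| ≤ l1norm ((↑T : Set ι).indicator v) / s := by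
  classical
  set S := Finset.univ.filter (v · ≠ 0)
  have hS : (support v).ncard = S.card := by
    rw [← Set.ncard_coe_finset]; congr 1; ext; simp [S]
  obtain ⟨T, hTS, hTcard, hTtop⟩ :=
    Finset.exists_subset_card_eq_forall_sdiff_le (|v ·|) S (k := min s S.card) (min_le_right _ _)
  refine ⟨T, hS ▸ hTcard, fun i hi => (Finset.mem_filter.1 (hTS hi)).2, fun i => ?_⟩
  rw [l1norm_indicator, le_div_iff₀ (by exact_mod_cast hs)]
  by_cases hi : i ∈ T ∨ v i = 0
  · have : (↑T : Set ι)ᶜ.indicator v i = 0 := by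
      rcases hi with hi | hi
      · exact Set.indicator_of_notMem (by simpa using hi) _
      · simp [hi]
    rw [this, abs_zero, zero_mul]
    exact Finset.sum_nonneg fun j _ => abs_nonneg _
  rw [not_or] at hi
  have hiS : i ∈ S \ T := Finset.mem_sdiff.2 ⟨Finset.mem_filter.2 ⟨Finset.mem_univ _, hi.2⟩, hi.1⟩
  have hTs : T.card = s := by
    by_contra hne
    have : T = S := Finset.eq_of_subset_of_card_le hTS (by omega)
    exact (Finset.mem_sdiff.1 hiS).2 (this ▸ (Finset.mem_sdiff.1 hiS).1)
  calc |(↑T : Set ι)ᶜ.indicator v i| * s = ∑ _j ∈ T, |v i| := by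
        rw [Set.indicator_of_mem (by simpa using hi.1), Finset.sum_const, hTs, nsmul_eq_mul,
          mul_comm]
    _ ≤ ∑ j ∈ T, |v j| := Finset.sum_le_sum fun j hj => hTtop j hj i hiS

def HasSparseDecomposition (s : ℕ) (v : ι → ℝ) (C : ℝ) : Prop :=
  ∃ (k : ℕ) (u : Fin k → ι → ℝ),
    (∀ j, (support (u j)).ncard ≤ s) ∧ ∑ j, u j = v ∧ ∑ j, l2norm (u j) ≤ C

namespace HasSparseDecomposition

variable {s : ℕ} {v : ι → ℝ} {C : ℝ}

lemma mono (hv : HasSparseDecomposition s v C) {C' : ℝ} (hC : C ≤ C') :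
    HasSparseDecomposition s v C' :=
  let ⟨k, u, hu, hsum, hnorm⟩ := hv
  ⟨k, u, hu, hsum, hnorm.trans hC⟩

lemma zero (hC : 0 ≤ C) : HasSparseDecomposition s (0 : ι → ℝ) C :=
  ⟨0, Fin.elim0, fun j => j.elim0, by simp, by simpa using hC⟩

lemma sparse_add (hv : HasSparseDecomposition s v C) {u₀ : ι → ℝ}
    (hu₀ : (support u₀).ncard ≤ s) : HasSparseDecomposition s (u₀ + v) (l2norm u₀ + C) := by
  obtain ⟨k, u, hu, hsum, hnorm⟩ := hv
  refine ⟨k + 1, Fin.cons u₀ u, Fin.cases hu₀ hu, by rw [Fin.sum_cons, hsum], ?_⟩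
  simpa [Fin.sum_univ_succ] using hnorm

end HasSparseDecomposition

lemma hasSparseDecomposition_of_top_block {s : ℕ} {v : ι → ℝ} {T : Finset ι}
    (hT : T.card ≤ s)
    (hrest : HasSparseDecomposition s ((↑T : Set ι)ᶜ.indicator v)
      (√s * (l1norm ((↑T : Set ι).indicator v) / s) + l1norm ((↑T : Set ι)ᶜ.indicator v) / √s)) :
    HasSparseDecomposition s v (l2norm ((↑T : Set ι).indicator v) + l1norm v / √s) := by
  have hsplit := hrest.sparse_add ((ncard_support_indicator_le T v).trans hT)
  rw [Set.indicator_self_add_compl] at hsplit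
  refine hsplit.mono (le_of_eq ?_)
  rw [mul_div_left_comm, Real.sqrt_div_self', mul_one_div, ← add_div,
    l1norm_indicator_add_indicator_compl]

lemma hasSparseDecomposition_of_abs_le {s : ℕ} (hs : 0 < s) (v : ι → ℝ) {m : ℝ} (hm : 0 ≤ m)
    (hv : ∀ i, |v i| ≤ m) : HasSparseDecomposition s v (√s * m + l1norm v / √s) := by
  induction hN : (support v).ncard using Nat.strong_induction_on generalizing v m with
  | _ N ih =>
    rcases eq_or_ne v 0 with rfl | hv0
    · exact .zero (by simp [l1norm]; positivity)
    obtain ⟨T, hTcard, hTsupp, hrest⟩ := exists_top_block hs v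
    have hT : T.Nonempty := by
      rw [← Finset.card_pos, hTcard, lt_min_iff, Set.ncard_pos]
      exact ⟨hs, support_nonempty_iff.2 hv0⟩
    obtain ⟨t, ht⟩ := hT
    have hsmaller : (support ((↑T : Set ι)ᶜ.indicator v)).ncard < N := by
      rw [Set.support_indicator, ← hN]
      exact Set.ncard_lt_ncard (Set.ssubset_iff_of_subset Set.inter_subset_right |>.2
        ⟨t, hTsupp ht, fun h => h.1 ht⟩)
    refine (hasSparseDecomposition_of_top_block (hTcard ▸ min_le_left _ _)
      (ih _ hsmaller _ (div_nonneg (l1norm_nonneg _) s.cast_nonneg) hrest rfl)).mono ?_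
    gcongr
    refine l2norm_le_of_abs_le hm (fun i => ?_) ?_
    · by_cases hi : i ∈ (↑T : Set ι) <;> simp [hi, hv i, hm]
    · exact (ncard_support_indicator_le T v).trans (hTcard ▸ min_le_left _ _)

lemma hasSparseDecomposition {s : ℕ} (hs : 0 < s) (v : ι → ℝ) :
    HasSparseDecomposition s v (l2norm v + l1norm v / √s) := by
  obtain ⟨T, hTcard, -, hrest⟩ := exists_top_block hs v
  have hdec := hasSparseDecomposition_of_abs_le hs _
    (div_nonneg (l1norm_nonneg _) s.cast_nonneg) hrest
  refine (hasSparseDecomposition_of_top_block (hTcard ▸ min_le_left _ _) hdec).mono ?_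
  gcongr
  exact l2norm_indicator_le _ _

lemma HasSparseDecomposition.abs_dotProduct_mulVec_self_le {Γ : Matrix ι ι ℝ} {s : ℕ} {δ : ℝ}
    (h : SparseQuadBound Γ (2 * s) δ) (hΓ : Γ.IsSymm) (hδ : 0 ≤ δ)
    {v : ι → ℝ} {C : ℝ} (hv : HasSparseDecomposition s v C) :
    |v ⬝ᵥ Γ *ᵥ v| ≤ δ * C ^ 2 := by
  obtain ⟨k, u, hu, rfl, hnorm⟩ := hv
  calc |(∑ j, u j) ⬝ᵥ Γ *ᵥ ∑ j, u j| ≤ δ * (∑ j, l2norm (u j)) ^ 2 :=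
        h.abs_dotProduct_mulVec_sum_le hΓ hu
    _ ≤ δ * C ^ 2 := by
        gcongr
        exact Finset.sum_nonneg fun j _ => l2norm_nonneg _

/-- If a symmetric matrix `Γ` satisfies `|vᵀΓv| ≤ δ` for all `2s`-sparse vectors `v` in the
ℓ₂-unit ball, then `|vᵀΓv| ≤ 75 δ ‖v‖₂²` for all `v` with `‖v‖₁ ≤ 4 √s ‖v‖₂`. -/
theorem quadform_bound_on_cone (n s : ℕ) (hs : 1 ≤ s) (δ : ℝ) (hδ : 0 < δ)
    (Γ : Matrix (Fin n) (Fin n) ℝ) (hΓ : Γ.IsSymm)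
    (h : ∀ v : Fin n → ℝ, Set.ncard {i | v i ≠ 0} ≤ 2 * s →
      Real.sqrt (∑ i, v i ^ 2) ≤ 1 → |v ⬝ᵥ Γ.mulVec v| ≤ δ) :
    ∀ v : Fin n → ℝ, (∑ i, |v i|) ≤ 4 * Real.sqrt s * Real.sqrt (∑ i, v i ^ 2) →
      |v ⬝ᵥ Γ.mulVec v| ≤ 75 * δ * ∑ i, v i ^ 2 := by
  intro v hv
  have hsqrt : 0 < √(s : ℝ) := Real.sqrt_pos.2 (by exact_mod_cast hs)
  have hcone : l2norm v + l1norm v / √s ≤ 5 * l2norm v := by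
    have : l1norm v / √s ≤ 4 * l2norm v := by
      rw [div_le_iff₀ hsqrt]
      exact hv.trans_eq (mul_right_comm _ _ _)
    linarith
  calc |v ⬝ᵥ Γ *ᵥ v| ≤ δ * (l2norm v + l1norm v / √s) ^ 2 :=
        (hasSparseDecomposition hs v).abs_dotProduct_mulVec_self_le h hΓ hδ.le
    _ ≤ δ * (5 * l2norm v) ^ 2 := by
        gcongr
        exact add_nonneg (l2norm_nonneg v) (div_nonneg (l1norm_nonneg v) hsqrt.le)
    _ = 25 * δ * ∑ i, v i ^ 2 := by rw [mul_pow, sq_l2norm]; ring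
    _ ≤ 75 * δ * ∑ i, v i ^ 2 := by gcongr; norm_num
end

section
/- Let Γ ∈ ℝ^{n×n} be a symmetric matrix, s ≥ 1 an integer, and δ > 0. Suppose |vᵀΓv| ≤ δ for all v with ‖v‖₀ ≤ 2s and ‖v‖₂ ≤ 1. Then for every v ∈ ℝⁿ, |vᵀΓv| ≤ 75δ‖v‖₂² + (75δ/(16s))‖v‖₁². -/
open Matrix

namespace QuadformAux

variable {n : ℕ}

noncomputable def N2 (v : Fin n → ℝ) : ℝ := Real.sqrt (∑ i, v i ^ 2)

noncomputable def N1 (v : Fin n → ℝ) : ℝ := ∑ i, |v i|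

lemma N2_nonneg (v : Fin n → ℝ) : 0 ≤ N2 v := Real.sqrt_nonneg _

lemma N1_nonneg (v : Fin n → ℝ) : 0 ≤ N1 v :=
  Finset.sum_nonneg fun _ _ => abs_nonneg _

lemma sq_N2 (v : Fin n → ℝ) : N2 v ^ 2 = ∑ i, v i ^ 2 :=
  Real.sq_sqrt (Finset.sum_nonneg fun _ _ => sq_nonneg _)

lemma N2_eq_zero {v : Fin n → ℝ} (hv : N2 v = 0) : v = 0 := by
  have h0 : (∑ i, v i ^ 2) = 0 := by
    have := sq_N2 v
    rw [hv] at this; simpa using this.symm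
  funext i
  have := (Finset.sum_eq_zero_iff_of_nonneg (fun i _ => sq_nonneg (v i))).mp h0 i
    (Finset.mem_univ i)
  exact pow_eq_zero_iff (n := 2) (by norm_num) |>.mp this

/-- Bound on `N2` of a vector supported on `S` with entries bounded by `c`. -/
lemma N2_le_sqrt_card {v : Fin n → ℝ} {S : Finset (Fin n)} {c : ℝ} (hc : 0 ≤ c)
    (hsupp : ∀ i, i ∉ S → v i = 0) (hbd : ∀ i, |v i| ≤ c) :
    N2 v ≤ Real.sqrt S.card * c := by
  have hsum : (∑ i, v i ^ 2) ≤ S.card * c ^ 2 := by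
    have h1 : (∑ i, v i ^ 2) = ∑ i ∈ S, v i ^ 2 := by
      refine (Finset.sum_subset (Finset.subset_univ S) ?_).symm
      intro i _ hi
      rw [hsupp i hi]; ring
    rw [h1]
    calc ∑ i ∈ S, v i ^ 2 ≤ ∑ _i ∈ S, c ^ 2 := by
          refine Finset.sum_le_sum fun i _ => ?_
          rw [← sq_abs]
          exact pow_le_pow_left₀ (abs_nonneg _) (hbd i) 2
      _ = S.card * c ^ 2 := by rw [Finset.sum_const]; simp [nsmul_eq_mul]
  calc N2 v ≤ Real.sqrt (S.card * c ^ 2) := Real.sqrt_le_sqrt hsum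
    _ = Real.sqrt S.card * c := by
        rw [Real.sqrt_mul (by positivity), Real.sqrt_sq hc]

/-- Choice of the `k` largest entries (in absolute value) of `v` inside `T`. -/
lemma exists_top (v : Fin n → ℝ) (k : ℕ) (T : Finset (Fin n)) :
    ∃ S ⊆ T, S.card = min k T.card ∧
      ∀ i ∈ S, ∀ j ∈ T, j ∉ S → |v j| ≤ |v i| := by
  induction k generalizing T with
  | zero => exact ⟨∅, Finset.empty_subset _, by simp, by simp⟩
  | succ k ih =>
    rcases T.eq_empty_or_nonempty with rfl | hT
    · exact ⟨∅, by simp, by simp, by simp⟩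
    · obtain ⟨i₀, hi₀T, hmax⟩ := T.exists_max_image (fun i => |v i|) hT
      obtain ⟨S', hS'sub, hS'card, hS'max⟩ := ih (T.erase i₀)
      have hi₀S' : i₀ ∉ S' := fun hmem => (Finset.mem_erase.mp (hS'sub hmem)).1 rfl
      refine ⟨insert i₀ S', ?_, ?_, ?_⟩
      · intro x hx
        rcases Finset.mem_insert.mp hx with rfl | hx
        · exact hi₀T
        · exact Finset.erase_subset _ _ (hS'sub hx)
      · rw [Finset.card_insert_of_notMem hi₀S', hS'card, Finset.card_erase_of_mem hi₀T]
        have : 1 ≤ T.card := Finset.card_pos.mpr hT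
        omega
      · intro i hi j hj hjS
        rcases Finset.mem_insert.mp hi with rfl | hi
        · exact hmax j hj
        · have hjne : j ≠ i₀ := fun hji => hjS (hji ▸ Finset.mem_insert_self _ _)
          exact hS'max i hi j (Finset.mem_erase.mpr ⟨hjne, hj⟩)
            (fun hc => hjS (Finset.mem_insert_of_mem hc))

/-- Shelling decomposition into `s`-sparse pieces. -/
lemma decomp (s : ℕ) (hs : 1 ≤ s) (N : ℕ) :
    ∀ (v : Fin n → ℝ) (c : ℝ), 0 ≤ c → (∀ i, |v i| ≤ c) →
      (Finset.univ.filter fun i => v i ≠ 0).card ≤ N →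
      ∃ (m : ℕ) (u : ℕ → Fin n → ℝ),
        (v = ∑ k ∈ Finset.range m, u k) ∧
        (∀ k, Set.ncard {i | u k i ≠ 0} ≤ s) ∧
        (∑ k ∈ Finset.range m, N2 (u k) ≤ Real.sqrt s * c + N1 v / Real.sqrt s) ∧
        (∑ k ∈ Finset.range m, N2 (u k) ≤ N2 v + N1 v / Real.sqrt s) := by
  have hs0 : (0:ℝ) < s := by exact_mod_cast hs
  have hsqs : (0:ℝ) < Real.sqrt s := Real.sqrt_pos.mpr hs0
  induction N with
  | zero =>
    intro v c hc hbd hcard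
    have hv : v = 0 := by
      funext i
      show v i = 0
      by_contra hvi
      have hmem : i ∈ Finset.univ.filter fun i => v i ≠ 0 := by simp [hvi]
      have := Finset.card_pos.mpr ⟨i, hmem⟩
      omega
    have h1 : 0 ≤ N1 v / Real.sqrt s := div_nonneg (N1_nonneg v) hsqs.le
    have h2 : 0 ≤ Real.sqrt s * c := mul_nonneg hsqs.le hc
    have h3 : 0 ≤ N2 v := N2_nonneg v
    refine ⟨0, fun _ => 0, by simp [hv], by simp, ?_, ?_⟩ <;>
      · simp only [Finset.range_zero, Finset.sum_empty]
        linarith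
  | succ N ih =>
    intro v c hc hbd hcard
    set T := Finset.univ.filter fun i => v i ≠ 0 with hT
    by_cases hsmall : T.card ≤ s
    · -- base case: v itself is s-sparse
      refine ⟨1, fun _ => v, by simp, ?_, ?_, ?_⟩
      · intro k
        show Set.ncard {i | v i ≠ 0} ≤ s
        have hcardeq : {i | v i ≠ 0}.ncard = T.card := by
          rw [Set.ncard_eq_toFinset_card']
          congr 1
          ext i; simp [hT]
        omega
      · simp only [Finset.range_one, Finset.sum_singleton]
        have h2 : N2 v ≤ Real.sqrt T.card * c :=
          N2_le_sqrt_card hc (fun i hi => by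
            by_contra hvi; exact hi (by simp [hT, hvi])) hbd
        have h3 : Real.sqrt T.card * c ≤ Real.sqrt s * c := by
          apply mul_le_mul_of_nonneg_right _ hc
          exact Real.sqrt_le_sqrt (by exact_mod_cast hsmall)
        have h4 : 0 ≤ N1 v / Real.sqrt s := div_nonneg (N1_nonneg v) hsqs.le
        linarith
      · simp only [Finset.range_one, Finset.sum_singleton]
        have h4 : 0 ≤ N1 v / Real.sqrt s := div_nonneg (N1_nonneg v) hsqs.le
        linarith
    · -- inductive case: split off the s largest entries
      push_neg at hsmall
      obtain ⟨S, hST, hScard, hSmax⟩ := exists_top v s T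
      have hScard' : S.card = s := by rw [hScard]; omega
      have hSne : S.Nonempty := Finset.card_pos.mp (by omega)
      set c' := S.inf' hSne (fun i => |v i|) with hc'
      have hc'0 : 0 ≤ c' := by
        obtain ⟨i, hi, hieq⟩ := S.exists_mem_eq_inf' hSne (fun i => |v i|)
        rw [hc', hieq]; exact abs_nonneg _
      set vS := (fun i => if i ∈ S then v i else 0) with hvS
      set v' := (fun i => if i ∈ S then 0 else v i) with hv'
      have hsplit : v = vS + v' := by
        funext i; by_cases hi : i ∈ S <;> simp [hvS, hv', hi]
      have hN1split : N1 v = N1 vS + N1 v' := by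
        rw [N1, N1, N1, ← Finset.sum_add_distrib]
        refine Finset.sum_congr rfl fun i _ => ?_
        by_cases hi : i ∈ S <;> simp [hvS, hv', hi]
      have hbd' : ∀ i, |v' i| ≤ c' := by
        intro i
        by_cases hi : i ∈ S
        · simp [hv', hi, hc'0]
        · by_cases hvi : v i = 0
          · simp [hv', hi, hvi, hc'0]
          · have hiT : i ∈ T := by simp [hT, hvi]
            have hle : |v i| ≤ c' :=
              Finset.le_inf' hSne _ (fun j hj => hSmax j hj i hiT hi)
            simpa [hv', hi] using hle
      have hsupp' : (Finset.univ.filter fun i => v' i ≠ 0) = T \ S := by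
        ext i
        by_cases hi : i ∈ S <;> simp [hv', hT, hi]
      have hcard' : (Finset.univ.filter fun i => v' i ≠ 0).card ≤ N := by
        rw [hsupp', Finset.card_sdiff_of_subset hST]
        omega
      obtain ⟨m', u', hsum', hsp', ha', _⟩ := ih v' c' hc'0 hbd' hcard'
      have hss : Real.sqrt s * Real.sqrt s = (s:ℝ) := Real.mul_self_sqrt hs0.le
      have hsc : (s : ℝ) * c' ≤ N1 vS := by
        have h5 : N1 vS = ∑ i ∈ S, |v i| := by
          rw [N1]
          rw [← Finset.sum_subset (Finset.subset_univ S) (fun i _ hi => by simp [hvS, hi])]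
          refine Finset.sum_congr rfl fun i hi => by simp [hvS, hi]
        have h6 : S.card • c' ≤ ∑ i ∈ S, |v i| :=
          Finset.card_nsmul_le_sum S _ _ (fun i hi => Finset.inf'_le _ hi)
        rw [h5]
        rw [hScard'] at h6
        simpa [nsmul_eq_mul] using h6
      have hkey : Real.sqrt s * c' ≤ N1 vS / Real.sqrt s := by
        rw [le_div_iff₀ hsqs]
        calc Real.sqrt s * c' * Real.sqrt s = Real.sqrt s * Real.sqrt s * c' := by ring
          _ = (s:ℝ) * c' := by rw [hss]
          _ ≤ N1 vS := hsc
      have hbdS : ∀ i, |vS i| ≤ c := by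
        intro i; by_cases hi : i ∈ S
        · simpa [hvS, hi] using hbd i
        · simpa [hvS, hi] using hc
      have hN2vS_le : N2 vS ≤ Real.sqrt s * c := by
        have h7 := N2_le_sqrt_card hc (S := S) (fun i hi => by simp [hvS, hi]) hbdS
        rwa [hScard'] at h7
      have hN2vS_le2 : N2 vS ≤ N2 v := by
        apply Real.sqrt_le_sqrt
        refine Finset.sum_le_sum fun i _ => ?_
        by_cases hi : i ∈ S <;> simp [hvS, hi, sq_nonneg]
      -- assemble
      refine ⟨m' + 1, fun k => Nat.rec vS (fun k _ => u' k) k, ?_, ?_, ?_, ?_⟩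
      · rw [Finset.sum_range_succ']
        show v = (∑ k ∈ Finset.range m', u' k) + vS
        rw [← hsum', hsplit, add_comm]
      · intro k
        cases k with
        | zero =>
          show {i | vS i ≠ 0}.ncard ≤ s
          have hsub : {i | vS i ≠ 0} ⊆ (S : Set (Fin n)) := by
            intro i hi
            simp only [Set.mem_setOf_eq, hvS] at hi
            by_cases hiS : i ∈ S
            · exact Finset.mem_coe.mpr hiS
            · simp [hiS] at hi
          calc {i | vS i ≠ 0}.ncard ≤ (S : Set (Fin n)).ncard :=
                Set.ncard_le_ncard hsub (S : Set (Fin n)).toFinite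
            _ = S.card := Set.ncard_coe_finset S
            _ = s := hScard'
        | succ k => exact hsp' k
      · rw [Finset.sum_range_succ']
        show (∑ k ∈ Finset.range m', N2 (u' k)) + N2 vS ≤ Real.sqrt s * c + N1 v / Real.sqrt s
        have hN1v' : N1 v' / Real.sqrt s + N1 vS / Real.sqrt s = N1 v / Real.sqrt s := by
          rw [hN1split]; ring
        linarith
      · rw [Finset.sum_range_succ']
        show (∑ k ∈ Finset.range m', N2 (u' k)) + N2 vS ≤ N2 v + N1 v / Real.sqrt s
        have hN1v' : N1 v' / Real.sqrt s + N1 vS / Real.sqrt s = N1 v / Real.sqrt s := by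
          rw [hN1split]; ring
        linarith

end QuadformAux

open QuadformAux

/-- If a symmetric matrix `Γ` satisfies `|vᵀΓv| ≤ δ` for all `2s`-sparse vectors `v` in the
ℓ₂-unit ball, then for every `v ∈ ℝⁿ`, `|vᵀΓv| ≤ 75 δ ‖v‖₂² + (75δ/(16s)) ‖v‖₁²`. -/
theorem quadform_bound_global (n s : ℕ) (hs : 1 ≤ s) (δ : ℝ) (hδ : 0 < δ)
    (Γ : Matrix (Fin n) (Fin n) ℝ) (hΓ : Γ.IsSymm)
    (h : ∀ v : Fin n → ℝ, Set.ncard {i | v i ≠ 0} ≤ 2 * s →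
      Real.sqrt (∑ i, v i ^ 2) ≤ 1 → |v ⬝ᵥ Γ.mulVec v| ≤ δ) :
    ∀ v : Fin n → ℝ,
      |v ⬝ᵥ Γ.mulVec v| ≤ 75 * δ * (∑ i, v i ^ 2) + 75 * δ / (16 * s) * (∑ i, |v i|) ^ 2 := by
  have hs' : (0:ℝ) < s := by exact_mod_cast hs
  have hsqs : (0:ℝ) < Real.sqrt s := Real.sqrt_pos.mpr hs'
  -- Step 1: quadratic bound with norm for 2s-sparse vectors
  have hquad : ∀ x : Fin n → ℝ, Set.ncard {i | x i ≠ 0} ≤ 2 * s →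
      |x ⬝ᵥ Γ.mulVec x| ≤ δ * (∑ i, x i ^ 2) := by
    intro x hx
    by_cases hx0 : x = 0
    · subst hx0
      have hz : ((0 : Fin n → ℝ) ⬝ᵥ Γ.mulVec 0) = 0 := by
        simp [zero_dotProduct]
      rw [hz, abs_zero]
      have : (0:ℝ) ≤ ∑ i : Fin n, (0:ℝ) ^ 2 := by positivity
      have hrhs : ∑ i : Fin n, ((0 : Fin n → ℝ) i) ^ 2 = ∑ i : Fin n, (0:ℝ) ^ 2 := rfl
      rw [hrhs]
      positivity
    · set r := N2 x with hr
      have hr0 : 0 < r := by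
        rcases lt_or_eq_of_le (N2_nonneg x) with h' | h'
        · exact h'
        · exact absurd (N2_eq_zero h'.symm) hx0
      have hsupp : {i | (r⁻¹ • x) i ≠ 0} = {i | x i ≠ 0} := by
        ext i; simp [Pi.smul_apply, smul_eq_mul, hr0.ne']
      have hsum : (∑ i, (r⁻¹ • x) i ^ 2) = r⁻¹ ^ 2 * ∑ i, x i ^ 2 := by
        rw [Finset.mul_sum]
        refine Finset.sum_congr rfl fun i _ => ?_
        simp [Pi.smul_apply, smul_eq_mul]; ring
      have hnorm : Real.sqrt (∑ i, (r⁻¹ • x) i ^ 2) ≤ 1 := by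
        rw [hsum, ← sq_N2 x, ← hr, inv_pow, inv_mul_cancel₀ (pow_ne_zero 2 hr0.ne'),
          Real.sqrt_one]
      have hbd := h (r⁻¹ • x) (by rw [hsupp]; exact hx) hnorm
      have hsmul : (r⁻¹ • x) ⬝ᵥ Γ.mulVec (r⁻¹ • x) = r⁻¹ ^ 2 * (x ⬝ᵥ Γ.mulVec x) := by
        rw [Matrix.mulVec_smul, smul_dotProduct, dotProduct_smul]
        simp only [smul_eq_mul]; ring
      rw [hsmul, abs_mul, abs_of_nonneg (by positivity : (0:ℝ) ≤ r⁻¹ ^ 2)] at hbd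
      have hid : |x ⬝ᵥ Γ.mulVec x| = r ^ 2 * (r⁻¹ ^ 2 * |x ⬝ᵥ Γ.mulVec x|) := by
        rw [← mul_assoc, ← mul_pow, mul_inv_cancel₀ hr0.ne', one_pow, one_mul]
      rw [← sq_N2 x, ← hr, hid]
      calc r ^ 2 * (r⁻¹ ^ 2 * |x ⬝ᵥ Γ.mulVec x|) ≤ r ^ 2 * δ :=
            mul_le_mul_of_nonneg_left hbd (by positivity)
        _ = δ * r ^ 2 := mul_comm _ _
  -- symmetry of the bilinear form
  have hsymm : ∀ u w : Fin n → ℝ, u ⬝ᵥ Γ.mulVec w = w ⬝ᵥ Γ.mulVec u := by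
    intro u w
    rw [Matrix.dotProduct_mulVec, ← Matrix.mulVec_transpose, hΓ.eq, dotProduct_comm]
  -- Step 2: bilinear bound for s-sparse vectors
  have hbilin : ∀ u w : Fin n → ℝ, Set.ncard {i | u i ≠ 0} ≤ s →
      Set.ncard {i | w i ≠ 0} ≤ s → |u ⬝ᵥ Γ.mulVec w| ≤ δ * N2 u * N2 w := by
    intro u w hu hw
    by_cases hu0 : u = 0
    · subst hu0
      have hz : ((0 : Fin n → ℝ) ⬝ᵥ Γ.mulVec w) = 0 := by simp [zero_dotProduct]
      rw [hz, abs_zero]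
      exact mul_nonneg (mul_nonneg hδ.le (N2_nonneg _)) (N2_nonneg _)
    by_cases hw0 : w = 0
    · subst hw0
      have hz : (u ⬝ᵥ Γ.mulVec 0) = 0 := by simp [Matrix.mulVec_zero]
      rw [hz, abs_zero]
      exact mul_nonneg (mul_nonneg hδ.le (N2_nonneg _)) (N2_nonneg _)
    have ha0 : 0 < N2 u := by
      rcases lt_or_eq_of_le (N2_nonneg u) with h' | h'
      · exact h'
      · exact absurd (N2_eq_zero h'.symm) hu0
    have hb0 : 0 < N2 w := by
      rcases lt_or_eq_of_le (N2_nonneg w) with h' | h'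
      · exact h'
      · exact absurd (N2_eq_zero h'.symm) hw0
    set uu := (N2 u)⁻¹ • u with huu
    set ww := (N2 w)⁻¹ • w with hww
    have huu2 : (∑ i, uu i ^ 2) = 1 := by
      have hsum : (∑ i, uu i ^ 2) = (N2 u)⁻¹ ^ 2 * ∑ i, u i ^ 2 := by
        rw [Finset.mul_sum]
        refine Finset.sum_congr rfl fun i _ => ?_
        simp [huu, Pi.smul_apply, smul_eq_mul]; ring
      rw [hsum, ← sq_N2 u, inv_pow, inv_mul_cancel₀ (pow_ne_zero 2 ha0.ne')]
    have hww2 : (∑ i, ww i ^ 2) = 1 := by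
      have hsum : (∑ i, ww i ^ 2) = (N2 w)⁻¹ ^ 2 * ∑ i, w i ^ 2 := by
        rw [Finset.mul_sum]
        refine Finset.sum_congr rfl fun i _ => ?_
        simp [hww, Pi.smul_apply, smul_eq_mul]; ring
      rw [hsum, ← sq_N2 w, inv_pow, inv_mul_cancel₀ (pow_ne_zero 2 hb0.ne')]
    have hsuppuu : {i | uu i ≠ 0} = {i | u i ≠ 0} := by
      ext i; simp [huu, Pi.smul_apply, smul_eq_mul, ha0.ne']
    have hsuppww : {i | ww i ≠ 0} = {i | w i ≠ 0} := by
      ext i; simp [hww, Pi.smul_apply, smul_eq_mul, hb0.ne']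
    have hsupp_sub : {i | (uu - ww) i ≠ 0} ⊆ {i | uu i ≠ 0} ∪ {i | ww i ≠ 0} := by
      intro i hi
      by_contra hc
      simp only [Set.mem_union, Set.mem_setOf_eq] at hc
      push_neg at hc
      simp [Pi.sub_apply, hc.1, hc.2] at hi
    have hsupp_add : {i | (uu + ww) i ≠ 0} ⊆ {i | uu i ≠ 0} ∪ {i | ww i ≠ 0} := by
      intro i hi
      by_contra hc
      simp only [Set.mem_union, Set.mem_setOf_eq] at hc
      push_neg at hc
      simp [Pi.add_apply, hc.1, hc.2] at hi
    have hsp1 : Set.ncard {i | (uu + ww) i ≠ 0} ≤ 2 * s := by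
      calc Set.ncard {i | (uu + ww) i ≠ 0}
          ≤ ({i | uu i ≠ 0} ∪ {i | ww i ≠ 0}).ncard :=
            Set.ncard_le_ncard hsupp_add (Set.toFinite _)
        _ ≤ {i | uu i ≠ 0}.ncard + {i | ww i ≠ 0}.ncard := Set.ncard_union_le _ _
        _ ≤ 2 * s := by rw [hsuppuu, hsuppww]; omega
    have hsp2 : Set.ncard {i | (uu - ww) i ≠ 0} ≤ 2 * s := by
      calc Set.ncard {i | (uu - ww) i ≠ 0}
          ≤ ({i | uu i ≠ 0} ∪ {i | ww i ≠ 0}).ncard :=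
            Set.ncard_le_ncard hsupp_sub (Set.toFinite _)
        _ ≤ {i | uu i ≠ 0}.ncard + {i | ww i ≠ 0}.ncard := Set.ncard_union_le _ _
        _ ≤ 2 * s := by rw [hsuppuu, hsuppww]; omega
    have hq1 := hquad (uu + ww) hsp1
    have hq2 := hquad (uu - ww) hsp2
    have hsum12 : (∑ i, (uu + ww) i ^ 2) + (∑ i, (uu - ww) i ^ 2) = 4 := by
      rw [← Finset.sum_add_distrib]
      have hpt : ∀ i : Fin n, (uu + ww) i ^ 2 + (uu - ww) i ^ 2 = 2 * uu i ^ 2 + 2 * ww i ^ 2 := by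
        intro i; simp only [Pi.add_apply, Pi.sub_apply]; ring
      rw [Finset.sum_congr rfl (fun i _ => hpt i), Finset.sum_add_distrib,
        ← Finset.mul_sum, ← Finset.mul_sum, huu2, hww2]
      norm_num
    have hexp : (uu + ww) ⬝ᵥ Γ.mulVec (uu + ww) - (uu - ww) ⬝ᵥ Γ.mulVec (uu - ww)
        = 4 * (uu ⬝ᵥ Γ.mulVec ww) := by
      simp only [Matrix.mulVec_add, Matrix.mulVec_sub, add_dotProduct,
        sub_dotProduct, dotProduct_add, dotProduct_sub, hsymm ww uu]
      ring
    have hPle : |uu ⬝ᵥ Γ.mulVec ww| ≤ δ := by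
      have h4 : |4 * (uu ⬝ᵥ Γ.mulVec ww)|
          ≤ δ * (∑ i, (uu + ww) i ^ 2) + δ * (∑ i, (uu - ww) i ^ 2) := by
        rw [← hexp]
        exact (abs_sub _ _).trans (add_le_add hq1 hq2)
      rw [abs_mul, abs_of_nonneg (by norm_num : (0:ℝ) ≤ (4:ℝ))] at h4
      have h5 : δ * (∑ i, (uu + ww) i ^ 2) + δ * (∑ i, (uu - ww) i ^ 2) = 4 * δ := by
        rw [← mul_add, hsum12]; ring
      linarith
    have hrescale : u ⬝ᵥ Γ.mulVec w = N2 u * N2 w * (uu ⬝ᵥ Γ.mulVec ww) := by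
      rw [huu, hww, Matrix.mulVec_smul, smul_dotProduct, dotProduct_smul]
      simp only [smul_eq_mul]
      field_simp
    rw [hrescale, abs_mul, abs_of_nonneg (by positivity : (0:ℝ) ≤ N2 u * N2 w)]
    calc N2 u * N2 w * |uu ⬝ᵥ Γ.mulVec ww| ≤ N2 u * N2 w * δ :=
          mul_le_mul_of_nonneg_left hPle (by positivity)
      _ = δ * N2 u * N2 w := by ring
  -- dot product sum expansion helpers
  have hdsum : ∀ (x : Fin n → ℝ) (m : ℕ) (w : ℕ → Fin n → ℝ),
      x ⬝ᵥ Γ.mulVec (∑ l ∈ Finset.range m, w l)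
        = ∑ l ∈ Finset.range m, x ⬝ᵥ Γ.mulVec (w l) := by
    intro x m w
    induction m with
    | zero => simp [Matrix.mulVec_zero]
    | succ m ihm =>
      rw [Finset.sum_range_succ, Finset.sum_range_succ, Matrix.mulVec_add,
        dotProduct_add, ihm]
  have hsdot : ∀ (m : ℕ) (w : ℕ → Fin n → ℝ) (y : Fin n → ℝ),
      (∑ l ∈ Finset.range m, w l) ⬝ᵥ Γ.mulVec y
        = ∑ l ∈ Finset.range m, (w l) ⬝ᵥ Γ.mulVec y := by
    intro m w y
    induction m with
    | zero => simp [zero_dotProduct]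
    | succ m ihm =>
      rw [Finset.sum_range_succ, Finset.sum_range_succ, add_dotProduct, ihm]
  -- main argument
  intro v
  have hbdv : ∀ i, |v i| ≤ N1 v := by
    intro i
    exact Finset.single_le_sum (f := fun i => |v i|) (fun j _ => abs_nonneg _)
      (Finset.mem_univ i)
  obtain ⟨m, u, hsum, hsp, _, hb⟩ := decomp s hs
    (Finset.univ.filter fun i => v i ≠ 0).card v (N1 v) (N1_nonneg v) hbdv le_rfl
  have hexpand : v ⬝ᵥ Γ.mulVec v
      = ∑ k ∈ Finset.range m, ∑ l ∈ Finset.range m, (u k) ⬝ᵥ Γ.mulVec (u l) := by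
    conv_lhs => rw [hsum]
    rw [hsdot]
    exact Finset.sum_congr rfl fun k _ => hdsum (u k) m u
  have habs : |v ⬝ᵥ Γ.mulVec v| ≤ δ * (∑ k ∈ Finset.range m, N2 (u k)) ^ 2 := by
    rw [hexpand]
    calc |∑ k ∈ Finset.range m, ∑ l ∈ Finset.range m, (u k) ⬝ᵥ Γ.mulVec (u l)|
        ≤ ∑ k ∈ Finset.range m, |∑ l ∈ Finset.range m, (u k) ⬝ᵥ Γ.mulVec (u l)| :=
          Finset.abs_sum_le_sum_abs _ _
      _ ≤ ∑ k ∈ Finset.range m, ∑ l ∈ Finset.range m, |(u k) ⬝ᵥ Γ.mulVec (u l)| :=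
          Finset.sum_le_sum fun k _ => Finset.abs_sum_le_sum_abs _ _
      _ ≤ ∑ k ∈ Finset.range m, ∑ l ∈ Finset.range m, δ * N2 (u k) * N2 (u l) :=
          Finset.sum_le_sum fun k _ => Finset.sum_le_sum fun l _ =>
            hbilin (u k) (u l) (hsp k) (hsp l)
      _ = δ * (∑ k ∈ Finset.range m, N2 (u k)) ^ 2 := by
          rw [sq, Finset.sum_mul_sum]
          rw [Finset.mul_sum]
          refine Finset.sum_congr rfl fun k _ => ?_
          rw [Finset.mul_sum]
          refine Finset.sum_congr rfl fun l _ => by ring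
  have hsum_nonneg : 0 ≤ ∑ k ∈ Finset.range m, N2 (u k) :=
    Finset.sum_nonneg fun k _ => N2_nonneg _
  have hfinal : δ * (∑ k ∈ Finset.range m, N2 (u k)) ^ 2
      ≤ 75 * δ * (∑ i, v i ^ 2) + 75 * δ / (16 * s) * (∑ i, |v i|) ^ 2 := by
    have h1 : (∑ k ∈ Finset.range m, N2 (u k)) ^ 2 ≤ (N2 v + N1 v / Real.sqrt s) ^ 2 :=
      pow_le_pow_left₀ hsum_nonneg hb 2
    set A := N2 v with hA
    set B := N1 v with hB
    have hA0 : 0 ≤ A := N2_nonneg v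
    have hB0 : 0 ≤ B := N1_nonneg v
    have hA2 : A ^ 2 = ∑ i, v i ^ 2 := sq_N2 v
    have hR2 : Real.sqrt s ^ 2 = (s:ℝ) := Real.sq_sqrt hs'.le
    have h2 : (A + B / Real.sqrt s) ^ 2 ≤ 2 * A ^ 2 + 2 * (B ^ 2 / s) := by
      have h3 : (B / Real.sqrt s) ^ 2 = B ^ 2 / s := by
        rw [div_pow, hR2]
      nlinarith [sq_nonneg (A - B / Real.sqrt s)]
    have hD : 0 ≤ B ^ 2 / s := by positivity
    have hrw : 75 * δ / (16 * s) * B ^ 2 = 75 / 16 * δ * (B ^ 2 / s) := by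
      field_simp
    have h4 : δ * (2 * A ^ 2 + 2 * (B ^ 2 / s))
        ≤ 75 * δ * A ^ 2 + 75 * δ / (16 * s) * B ^ 2 := by
      rw [hrw]
      nlinarith [mul_nonneg hδ.le hD, mul_nonneg hδ.le (sq_nonneg A)]
    calc δ * (∑ k ∈ Finset.range m, N2 (u k)) ^ 2 ≤ δ * (A + B / Real.sqrt s) ^ 2 :=
          mul_le_mul_of_nonneg_left h1 hδ.le
      _ ≤ δ * (2 * A ^ 2 + 2 * (B ^ 2 / s)) := mul_le_mul_of_nonneg_left h2 hδ.le
      _ ≤ 75 * δ * A ^ 2 + 75 * δ / (16 * s) * B ^ 2 := h4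
      _ = 75 * δ * (∑ i, v i ^ 2) + 75 * δ / (16 * s) * (∑ i, |v i|) ^ 2 := by
          rw [hA2, hB, N1]
  exact le_trans habs hfinal
end

section
/- Let Γ̂ and Γ be symmetric n×n matrices and δ > 0. Suppose vᵀΓv ≥ δ‖v‖₂² for all v ∈ ℝⁿ, and |vᵀ(Γ̂ - Γ)v| ≤ δ/150 for all v with ‖v‖₀ ≤ 2s and ‖v‖₂ ≤ 1. Then vᵀΓ̂v ≥ (δ/2)‖v‖₂² - (δ/(32s))‖v‖₁² for all v ∈ ℝⁿ. -/
/-!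
Write `Q` for the quadratic form of `Γ̂ - Γ` and `ε = δ / 150`. Sort the coordinates of `v` by
decreasing magnitude and cut them into consecutive blocks `u₀, u₁, …` of `s` coordinates. Every
entry of `u_{j+1}` is at most the average magnitude `‖u_j‖₁ / s` of the block before it, so
`‖u_{j+1}‖₂ ≤ ‖u_j‖₁ / √s`, and hence `∑ ‖u_j‖₂ ≤ ‖v‖₂ + ‖v‖₁ / √s`.

Any two blocks together are `2s`-sparse, so by homogeneity and polarization
`|B(u_j, u_k) + B(u_k, u_j)| ≤ 2ε ‖u_j‖₂ ‖u_k‖₂` for the bilinear form `B` of `Γ̂ - Γ`.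
Expanding `Q(∑ u_j)` gives `|Q v| ≤ ε (‖v‖₂ + ‖v‖₁ / √s)² ≤ 2ε (‖v‖₂² + ‖v‖₁² / s)`, and
`vᵀΓ̂v = vᵀΓv + Q v` together with `vᵀΓv ≥ δ ‖v‖₂²` leaves the stated margin.
-/

open Matrix Finset Function

namespace RestrictedEigenvalue

theorem exists_card_eq_forall_le {ι α : Type*} [Fintype ι] [LinearOrder α] (f : ι → α) {k : ℕ}
    (hk : k ≤ Fintype.card ι) :
    ∃ A : Finset ι, #A = k ∧ ∀ i ∈ A, ∀ j ∉ A, f j ≤ f i := by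
  classical
  induction k with
  | zero => exact ⟨∅, rfl, by simp⟩
  | succ k ih =>
    obtain ⟨A, hcard, htop⟩ := ih (by omega)
    have hne : Aᶜ.Nonempty := by rw [← card_pos, card_compl]; omega
    obtain ⟨j, hjA, hj⟩ := Aᶜ.exists_max_image f hne
    rw [mem_compl] at hjA
    refine ⟨insert j A, by rw [card_insert_of_notMem hjA, hcard], fun i hi l hl => ?_⟩
    rw [mem_insert, not_or] at hl
    rcases mem_insert.1 hi with rfl | hi
    · exact hj l (mem_compl.2 hl.2)
    · exact htop i hi l hl.2

variable {ι : Type*} [Fintype ι]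

theorem sum_sq_pos_of_ne_zero {v : ι → ℝ} (hv : v ≠ 0) : 0 < ∑ i, v i ^ 2 := by
  obtain ⟨i, hi⟩ := Function.ne_iff.1 hv
  exact sum_pos' (fun j _ => sq_nonneg (v j)) ⟨i, mem_univ i, sq_pos_of_ne_zero hi⟩

theorem sqrt_sum_sq_le_of_ncard_support_le {s : ℕ} {v : ι → ℝ} {t : ℝ}
    (hv : (support v).ncard ≤ s) (ht0 : 0 ≤ t) (ht : ∀ i, |v i| ≤ t) :
    √(∑ i, v i ^ 2) ≤ √s * t := by
  classical
  have hsum : ∑ i, v i ^ 2 ≤ s * t ^ 2 :=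
    calc ∑ i, v i ^ 2 = ∑ i ∈ (support v).toFinset, v i ^ 2 :=
          (sum_subset (subset_univ _) fun i _ hi => by simpa using hi).symm
      _ ≤ #(support v).toFinset • t ^ 2 :=
          sum_le_card_nsmul _ _ _ fun i _ => by
            simpa only [sq_abs] using pow_le_pow_left₀ (abs_nonneg (v i)) (ht i) 2
      _ ≤ s * t ^ 2 := by
          rw [nsmul_eq_mul, ← Set.ncard_eq_toFinset_card']
          gcongr
  calc √(∑ i, v i ^ 2) ≤ √(s * t ^ 2) := Real.sqrt_le_sqrt hsum
    _ = √s * t := by rw [Real.sqrt_mul (Nat.cast_nonneg s), Real.sqrt_sq ht0]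

theorem exists_split_off_largest {s : ℕ} (hs : 0 < s) (v : ι → ℝ)
    (hv : s < (support v).ncard) :
    ∃ a b : ι → ℝ, a + b = v ∧ (∀ i, |a i| ≤ |v i|) ∧ (support a).ncard ≤ s ∧
      (support b).ncard < (support v).ncard ∧ ∑ i, |v i| = ∑ i, |a i| + ∑ i, |b i| ∧
      ∀ j, s * |b j| ≤ ∑ i, |a i| := by
  classical
  have hsι : s ≤ Fintype.card ι :=
    hv.le.trans ((Set.ncard_le_card _).trans_eq Nat.card_eq_fintype_card)
  obtain ⟨A, hcard, htop⟩ := exists_card_eq_forall_le (fun i => |v i|) hsι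
  have hA_sum : ∑ i, |(A : Set ι).indicator v i| = ∑ i ∈ A, |v i| := by
    simp [Set.indicator_apply, apply_ite]
  have hA_meets : ∃ i ∈ A, v i ≠ 0 := by
    by_contra! hzero
    obtain ⟨i₀, hi₀⟩ := card_pos.1 (hcard ▸ hs)
    have : support v ⊆ A := fun j hj => by
      by_contra hjA
      exact hj (abs_nonpos_iff.1 ((htop i₀ hi₀ j hjA).trans_eq (by simp [hzero i₀ hi₀])))
    exact hv.not_ge ((Set.ncard_le_ncard this).trans_eq (by simp [hcard]))
  refine ⟨(A : Set ι).indicator v, (A : Set ι)ᶜ.indicator v, Set.indicator_self_add_compl _ _,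
    fun i => ?_, ?_, ?_, ?_, fun j => ?_⟩
  · by_cases h : i ∈ A <;> simp [h]
  · rw [Set.support_indicator]
    exact (Set.ncard_le_ncard Set.inter_subset_left).trans_eq (by simp [hcard])
  · obtain ⟨i, hiA, hvi⟩ := hA_meets
    rw [Set.support_indicator]
    exact Set.ncard_lt_ncard ⟨Set.inter_subset_right, fun h => (h hvi).1 (mem_coe.2 hiA)⟩
  · rw [← sum_add_distrib]
    refine sum_congr rfl fun i _ => ?_
    by_cases h : i ∈ A <;> simp [h]
  · by_cases hj : j ∈ A
    · simp only [Set.indicator_of_notMem (Set.notMem_compl_iff.2 (mem_coe.2 hj)), abs_zero,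
        mul_zero]
      positivity
    · calc s * |(A : Set ι)ᶜ.indicator v j| = ∑ _i ∈ A, |v j| := by simp [hj, hcard]
        _ ≤ ∑ i ∈ A, |v i| := sum_le_sum fun i hi => htop i hi j hj
        _ = _ := hA_sum.symm

/-- The bound `√s * t` on the first block is what the recursion needs, `‖v‖₂` is what the
theorem needs. -/
theorem exists_sparse_blocks {s : ℕ} (hs : 0 < s) (v : ι → ℝ) {t : ℝ} (ht0 : 0 ≤ t)
    (ht : ∀ i, |v i| ≤ t) :
    ∃ (m : ℕ) (u : Fin m → ι → ℝ), ∑ j, u j = v ∧ (∀ j, (support (u j)).ncard ≤ s) ∧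
      ∑ j, √(∑ i, u j i ^ 2) ≤ min √(∑ i, v i ^ 2) (√s * t) + (∑ i, |v i|) / √s := by
  induction hN : (support v).ncard using Nat.strong_induction_on generalizing v t with
  | _ N ih =>
  by_cases hvs : N ≤ s
  · refine ⟨1, fun _ => v, by simp, fun _ => hN ▸ hvs, ?_⟩
    rw [Fin.sum_univ_one]
    have := le_min le_rfl (sqrt_sum_sq_le_of_ncard_support_le (hN ▸ hvs) ht0 ht)
    have : 0 ≤ (∑ i, |v i|) / √s := by positivity
    linarith
  obtain ⟨a, b, rfl, hav, has, hbN, hl1_split, hbt⟩ := exists_split_off_largest hs v (by omega)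
  have hs' : (0 : ℝ) < s := by exact_mod_cast hs
  obtain ⟨m, u, hsum, hsp, hnorm⟩ := ih _ (hN ▸ hbN) b (t := (∑ i, |a i|) / s)
    (by positivity) (fun j => by rw [le_div_iff₀ hs', mul_comm]; exact hbt j) rfl
  refine ⟨m + 1, Fin.cons a u, by rw [Fin.sum_univ_succ]; simp [hsum], Fin.cases has hsp, ?_⟩
  have ha : √(∑ i, a i ^ 2) ≤ min √(∑ i, (a + b) i ^ 2) (√s * t) := by
    refine le_min (Real.sqrt_le_sqrt (sum_le_sum fun i _ => ?_))
      (sqrt_sum_sq_le_of_ncard_support_le has ht0 fun i => (hav i).trans (ht i))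
    simpa only [sq_abs] using pow_le_pow_left₀ (abs_nonneg _) (hav i) 2
  have hscale : √s * ((∑ i, |a i|) / s) = (∑ i, |a i|) / √s := by
    field_simp
    rw [Real.sq_sqrt hs'.le, mul_comm]
  rw [Fin.sum_univ_succ]
  simp only [Fin.cons_zero, Fin.cons_succ]
  calc √(∑ i, a i ^ 2) + ∑ j, √(∑ i, u j i ^ 2)
      ≤ min √(∑ i, (a + b) i ^ 2) (√s * t) +
          ((∑ i, |a i|) / √s + (∑ i, |b i|) / √s) := by
        gcongr
        exact hnorm.trans (by rw [← hscale]; gcongr; exact min_le_right _ _)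
    _ = _ := by rw [hl1_split, add_div]

variable {M : Matrix ι ι ℝ} {ε : ℝ}

theorem abs_quadForm_le_of_unit_ball {k : ℕ}
    (h : ∀ x : ι → ℝ, (support x).ncard ≤ k → √(∑ i, x i ^ 2) ≤ 1 → |x ⬝ᵥ M *ᵥ x| ≤ ε)
    {x : ι → ℝ} (hx : (support x).ncard ≤ k) :
    |x ⬝ᵥ M *ᵥ x| ≤ ε * ∑ i, x i ^ 2 := by
  rcases eq_or_ne x 0 with rfl | hx0
  · simp
  set r := √(∑ i, x i ^ 2)
  have hr : 0 < r := Real.sqrt_pos.2 (sum_sq_pos_of_ne_zero hx0)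
  have hr2 : r ^ 2 = ∑ i, x i ^ 2 := Real.sq_sqrt (sum_sq_pos_of_ne_zero hx0).le
  have hunit : √(∑ i, (r⁻¹ • x) i ^ 2) ≤ 1 := by
    simp only [Pi.smul_apply, smul_eq_mul, mul_pow, ← mul_sum, ← hr2]
    rw [inv_pow, inv_mul_cancel₀ (by positivity), Real.sqrt_one]
  have hscaled := h (r⁻¹ • x)
    ((Set.ncard_le_ncard (support_const_smul_subset _ _)).trans hx) hunit
  rw [mulVec_smul, dotProduct_smul, smul_dotProduct, smul_eq_mul, smul_eq_mul, ← mul_assoc,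
    abs_mul, abs_of_pos (by positivity)] at hscaled
  calc |x ⬝ᵥ M *ᵥ x| = r ^ 2 * (r⁻¹ * r⁻¹ * |x ⬝ᵥ M *ᵥ x|) := by field_simp
    _ ≤ r ^ 2 * ε := by gcongr
    _ = ε * ∑ i, x i ^ 2 := by rw [hr2, mul_comm]

theorem abs_bilin_add_bilin_le {S : Set ι}
    (hS : ∀ x : ι → ℝ, support x ⊆ S → |x ⬝ᵥ M *ᵥ x| ≤ ε * ∑ i, x i ^ 2)
    {a b : ι → ℝ} (ha : support a ⊆ S) (hb : support b ⊆ S) :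
    |a ⬝ᵥ M *ᵥ b + b ⬝ᵥ M *ᵥ a| ≤ ε * (∑ i, a i ^ 2 + ∑ i, b i ^ 2) := by
  have hpolar : 2 * (a ⬝ᵥ M *ᵥ b + b ⬝ᵥ M *ᵥ a) =
      (a + b) ⬝ᵥ M *ᵥ (a + b) - (a - b) ⬝ᵥ M *ᵥ (a - b) := by
    simp only [mulVec_add, mulVec_sub, dotProduct_add, dotProduct_sub, add_dotProduct,
      sub_dotProduct]
    ring
  have hparallelogram : ∑ i, (a + b) i ^ 2 + ∑ i, (a - b) i ^ 2 =
      2 * (∑ i, a i ^ 2 + ∑ i, b i ^ 2) := by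
    simp only [Pi.add_apply, Pi.sub_apply, ← sum_add_distrib, mul_sum]
    exact sum_congr rfl fun i _ => by ring
  have hadd := hS (a + b) ((support_add a b).trans (Set.union_subset ha hb))
  have hsub := hS (a - b) ((support_sub a b).trans (Set.union_subset ha hb))
  have := (abs_sub _ _).trans (add_le_add hadd hsub)
  rw [← hpolar, abs_mul, abs_two, ← mul_add, hparallelogram] at this
  linarith

theorem abs_bilin_add_bilin_le_mul_sqrt {S : Set ι}
    (hS : ∀ x : ι → ℝ, support x ⊆ S → |x ⬝ᵥ M *ᵥ x| ≤ ε * ∑ i, x i ^ 2)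
    {a b : ι → ℝ} (ha : support a ⊆ S) (hb : support b ⊆ S) :
    |a ⬝ᵥ M *ᵥ b + b ⬝ᵥ M *ᵥ a| ≤ 2 * ε * √(∑ i, a i ^ 2) * √(∑ i, b i ^ 2) := by
  rcases eq_or_ne a 0 with rfl | ha0
  · simp
  rcases eq_or_ne b 0 with rfl | hb0
  · simp
  set α := √(∑ i, a i ^ 2)
  set β := √(∑ i, b i ^ 2)
  have hα : 0 < α := Real.sqrt_pos.2 (sum_sq_pos_of_ne_zero ha0)
  have hβ : 0 < β := Real.sqrt_pos.2 (sum_sq_pos_of_ne_zero hb0)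
  have hα2 : α ^ 2 = ∑ i, a i ^ 2 := Real.sq_sqrt (sum_sq_pos_of_ne_zero ha0).le
  have hβ2 : β ^ 2 = ∑ i, b i ^ 2 := Real.sq_sqrt (sum_sq_pos_of_ne_zero hb0).le
  -- `β • a` and `α • b` have the same norm, where the bound `ε (‖x‖² + ‖y‖²)` is sharpest
  have key := abs_bilin_add_bilin_le hS ((support_const_smul_subset β a).trans ha)
    ((support_const_smul_subset α b).trans hb)
  have hlhs : (β • a) ⬝ᵥ M *ᵥ (α • b) + (α • b) ⬝ᵥ M *ᵥ (β • a) =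
      α * β * (a ⬝ᵥ M *ᵥ b + b ⬝ᵥ M *ᵥ a) := by
    simp only [mulVec_smul, dotProduct_smul, smul_dotProduct, smul_eq_mul]
    ring
  have hrhs : ∑ i, (β • a) i ^ 2 + ∑ i, (α • b) i ^ 2 = α * β * (2 * α * β) := by
    simp only [Pi.smul_apply, smul_eq_mul, mul_pow, ← mul_sum, ← hα2, ← hβ2]
    ring
  rw [hlhs, hrhs, abs_mul, abs_of_pos (by positivity), mul_left_comm] at key
  have := le_of_mul_le_mul_left key (by positivity)
  linarith

theorem abs_quadForm_sum_le {κ : Type*} {s : ℕ}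
    (hq : ∀ x : ι → ℝ, (support x).ncard ≤ 2 * s → |x ⬝ᵥ M *ᵥ x| ≤ ε * ∑ i, x i ^ 2)
    (J : Finset κ) (u : κ → ι → ℝ) (hu : ∀ j ∈ J, (support (u j)).ncard ≤ s) :
    |(∑ j ∈ J, u j) ⬝ᵥ M *ᵥ (∑ j ∈ J, u j)| ≤ ε * (∑ j ∈ J, √(∑ i, u j i ^ 2)) ^ 2 := by
  have hpair : ∀ j ∈ J, ∀ k ∈ J, |u j ⬝ᵥ M *ᵥ u k + u k ⬝ᵥ M *ᵥ u j| ≤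
      2 * ε * √(∑ i, u j i ^ 2) * √(∑ i, u k i ^ 2) := fun j hj k hk =>
    abs_bilin_add_bilin_le_mul_sqrt (S := support (u j) ∪ support (u k))
      (fun x hx => hq x <| (Set.ncard_le_ncard hx).trans <|
        (Set.ncard_union_le _ _).trans (by linarith [hu j hj, hu k hk]))
      Set.subset_union_left Set.subset_union_right
  have hexpand : 2 * ((∑ j ∈ J, u j) ⬝ᵥ M *ᵥ (∑ j ∈ J, u j)) =
      ∑ j ∈ J, ∑ k ∈ J, (u j ⬝ᵥ M *ᵥ u k + u k ⬝ᵥ M *ᵥ u j) := by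
    simp only [mulVec_sum, dotProduct_sum, sum_dotProduct, sum_add_distrib]
    rw [sum_comm (f := fun j k => u k ⬝ᵥ M *ᵥ u j)]
    ring
  have hbound := (abs_sum_le_sum_abs _ _).trans (sum_le_sum fun j hj =>
    (abs_sum_le_sum_abs _ _).trans (sum_le_sum fun k hk => hpair j hj k hk))
  rw [← hexpand, abs_mul, abs_two] at hbound
  simp only [mul_assoc, ← mul_sum, ← sum_mul] at hbound
  rw [sq]
  linarith

theorem abs_quadForm_le_of_sparse {s : ℕ} (hs : 0 < s) (hε : 0 ≤ ε)
    (hq : ∀ x : ι → ℝ, (support x).ncard ≤ 2 * s → |x ⬝ᵥ M *ᵥ x| ≤ ε * ∑ i, x i ^ 2)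
    (v : ι → ℝ) :
    |v ⬝ᵥ M *ᵥ v| ≤ ε * (√(∑ i, v i ^ 2) + (∑ i, |v i|) / √s) ^ 2 := by
  obtain ⟨m, u, rfl, hsparse, hnorm⟩ := exists_sparse_blocks hs v (t := ∑ i, |v i|)
    (by positivity) fun i => single_le_sum (fun j _ => abs_nonneg (v j)) (mem_univ i)
  calc _ ≤ ε * (∑ j, √(∑ i, u j i ^ 2)) ^ 2 :=
        abs_quadForm_sum_le hq univ u fun j _ => hsparse j
    _ ≤ _ := by
      gcongr
      exact hnorm.trans (by gcongr; exact min_le_left _ _)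

end RestrictedEigenvalue

open RestrictedEigenvalue in
theorem restricted_eigenvalue_transfer_global_general (n s : ℕ) (hs : 1 ≤ s) (δ : ℝ) (hδ : 0 < δ)
    (Γhat Γ : Matrix (Fin n) (Fin n) ℝ)
    (hlow : ∀ v : Fin n → ℝ, δ * ∑ i, v i ^ 2 ≤ v ⬝ᵥ Γ.mulVec v)
    (hdev : ∀ v : Fin n → ℝ, Set.ncard {i | v i ≠ 0} ≤ 2 * s →
      Real.sqrt (∑ i, v i ^ 2) ≤ 1 → |v ⬝ᵥ (Γhat - Γ).mulVec v| ≤ δ / 150) :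
    ∀ v : Fin n → ℝ,
      δ / 2 * (∑ i, v i ^ 2) - δ / (32 * s) * (∑ i, |v i|) ^ 2 ≤ v ⬝ᵥ Γhat.mulVec v := by
  intro v
  have hs' : (0 : ℝ) < s := by exact_mod_cast hs
  have hdeviation := abs_quadForm_le_of_sparse hs (by positivity)
    (fun x hx => abs_quadForm_le_of_unit_ball hdev hx) v
  have hsq : (√(∑ i, v i ^ 2) + (∑ i, |v i|) / √s) ^ 2 ≤
      2 * (∑ i, v i ^ 2 + (∑ i, |v i|) ^ 2 / s) := by
    refine add_sq_le.trans_eq ?_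
    rw [Real.sq_sqrt (by positivity), div_pow, Real.sq_sqrt hs'.le]
  have hsplit : v ⬝ᵥ Γhat *ᵥ v = v ⬝ᵥ Γ *ᵥ v + v ⬝ᵥ (Γhat - Γ) *ᵥ v := by
    rw [sub_mulVec, dotProduct_sub]; ring
  have hl1 : δ / (32 * s) * (∑ i, |v i|) ^ 2 = δ / 32 * ((∑ i, |v i|) ^ 2 / s) := by
    field_simp
  rw [hsplit, hl1]
  linarith [hlow v, neg_abs_le (v ⬝ᵥ (Γhat - Γ) *ᵥ v),
    mul_le_mul_of_nonneg_left hsq (by positivity : (0 : ℝ) ≤ δ / 150),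
    mul_nonneg hδ.le (by positivity : 0 ≤ ∑ i, v i ^ 2),
    mul_nonneg hδ.le (by positivity : 0 ≤ (∑ i, |v i|) ^ 2 / s)]

/-- Restricted eigenvalue transfer, global version: if `vᵀΓv ≥ δ‖v‖₂²` for all `v ∈ ℝⁿ`,
and `|vᵀ(Γ̂ - Γ)v| ≤ δ/150` for all `2s`-sparse `v` in the ℓ₂-unit ball, then
`vᵀΓ̂v ≥ (δ/2)‖v‖₂² - (δ/(32s))‖v‖₁²` for all `v ∈ ℝⁿ`. -/
theorem restricted_eigenvalue_transfer_global (n s : ℕ) (hs : 1 ≤ s) (δ : ℝ) (hδ : 0 < δ)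
    (Γhat Γ : Matrix (Fin n) (Fin n) ℝ) (hΓhat : Γhat.IsSymm) (hΓ : Γ.IsSymm)
    (hlow : ∀ v : Fin n → ℝ, δ * ∑ i, v i ^ 2 ≤ v ⬝ᵥ Γ.mulVec v)
    (hdev : ∀ v : Fin n → ℝ, Set.ncard {i | v i ≠ 0} ≤ 2 * s →
      Real.sqrt (∑ i, v i ^ 2) ≤ 1 → |v ⬝ᵥ (Γhat - Γ).mulVec v| ≤ δ / 150) :
    ∀ v : Fin n → ℝ,
      δ / 2 * (∑ i, v i ^ 2) - δ / (32 * s) * (∑ i, |v i|) ^ 2 ≤ v ⬝ᵥ Γhat.mulVec v :=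
  restricted_eigenvalue_transfer_global_general n s hs δ hδ Γhat Γ hlow hdev
end

section
/- For Lasso-type estimation: let β̂ minimize (1/(2N))‖y - Xβ‖₂² + λ‖Dβ‖₁ over β ∈ ℝⁿ, where y = Xβ* + ε, D ∈ ℝ^{(m+n)×n} has full column rank with Moore–Penrose inverse D⁺ satisfying D⁺D = Iₙ, and S ⊆ [m+n] contains the support of Dβ*. If λ ≥ (2/N)‖εᵀXD⁺‖_∞, then the error Δ = β̂ - β* satisfies ‖(DΔ)_{S^c}‖₁ ≤ 3‖(DΔ)_S‖₁. -/
/-!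
Comparing the objective at `β̂` with its value at `β*` and discarding `‖XΔ‖²/(2N) ≥ 0` gives
`λ‖Dβ̂‖₁ ≤ ⟪ε, XΔ⟫/N + λ‖Dβ*‖₁`. Since `D⁺D = 1`, `⟪ε, XΔ⟫ = ⟪εᵀXD⁺, DΔ⟫`, which Hölder and the choice
of `λ` bound by `(Nλ/2)‖DΔ‖₁`. Hence `‖Dβ* + DΔ‖₁ ≤ ‖DΔ‖₁/2 + ‖Dβ*‖₁`; as `Dβ*` vanishes off `S`, the
triangle inequality on `S` turns this into the cone condition.
-/

open Matrix

lemma sum_sq_sub_eq {ι : Type*} [Fintype ι] (e v : ι → ℝ) :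
    ∑ i, (e i - v i) ^ 2 = ∑ i, e i ^ 2 - 2 * (e ⬝ᵥ v) + ∑ i, v i ^ 2 := by
  simp only [dotProduct, Finset.mul_sum, ← Finset.sum_sub_distrib, ← Finset.sum_add_distrib]
  exact Finset.sum_congr rfl fun i _ => by ring

lemma dotProduct_mulVec_eq_of_mul_eq_one {l m n : Type*} [Fintype l] [Fintype m] [Fintype n]
    [DecidableEq m] (A : Matrix l m ℝ) (B : Matrix m n ℝ) (C : Matrix n m ℝ)
    (hBC : B * C = 1) (x : l → ℝ) (v : m → ℝ) :
    x ⬝ᵥ A *ᵥ v = x ᵥ* (A * B) ⬝ᵥ C *ᵥ v := by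
  rw [← vecMul_vecMul, ← dotProduct_mulVec (x ᵥ* A), mulVec_mulVec, hBC, one_mulVec,
    dotProduct_mulVec]

lemma dotProduct_le_mul_sum_abs {ι : Type*} [Fintype ι] (w u : ι → ℝ) {c : ℝ}
    (hw : ∀ i, |w i| ≤ c) : w ⬝ᵥ u ≤ c * ∑ i, |u i| := by
  rw [Finset.mul_sum]
  refine Finset.sum_le_sum fun i _ => ?_
  calc w i * u i ≤ |w i| * |u i| := (le_abs_self _).trans (abs_mul _ _).le
    _ ≤ c * |u i| := mul_le_mul_of_nonneg_right (hw i) (abs_nonneg _)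

lemma sum_compl_abs_le_three_mul_of_sum_abs_add_le {ι : Type*} [Fintype ι] [DecidableEq ι]
    (S : Finset ι) (a u : ι → ℝ) (ha : ∀ i ∉ S, a i = 0)
    (h : ∑ i, |a i + u i| ≤ 1 / 2 * ∑ i, |u i| + ∑ i, |a i|) :
    ∑ i ∈ Sᶜ, |u i| ≤ 3 * ∑ i ∈ S, |u i| := by
  have hSc : ∑ i ∈ Sᶜ, |a i + u i| = ∑ i ∈ Sᶜ, |u i| :=
    Finset.sum_congr rfl fun i hi => by rw [ha i (Finset.mem_compl.mp hi), zero_add]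
  have hSc' : ∑ i ∈ Sᶜ, |a i| = 0 :=
    Finset.sum_eq_zero fun i hi => by rw [ha i (Finset.mem_compl.mp hi), abs_zero]
  have hS : ∑ i ∈ S, |a i| - ∑ i ∈ S, |u i| ≤ ∑ i ∈ S, |a i + u i| := by
    rw [← Finset.sum_sub_distrib]
    exact Finset.sum_le_sum fun i _ => by
      simpa using abs_sub_abs_le_abs_sub (a i) (-u i)
  rw [← Finset.sum_add_sum_compl S, ← Finset.sum_add_sum_compl S (fun i => |u i|),
    ← Finset.sum_add_sum_compl S (fun i => |a i|), hSc, hSc'] at h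
  linarith

lemma lasso_basic_inequality {N n k : ℕ} (X : Matrix (Fin N) (Fin n) ℝ) (ε : Fin N → ℝ)
    (D : Matrix (Fin k) (Fin n) ℝ) (lam : ℝ) (βstar βhat : Fin n → ℝ)
    (hopt : 1 / (2 * (N : ℝ)) * ∑ i, ((X *ᵥ βstar + ε) i - (X *ᵥ βhat) i) ^ 2
          + lam * ∑ i, |(D *ᵥ βhat) i|
        ≤ 1 / (2 * (N : ℝ)) * ∑ i, ((X *ᵥ βstar + ε) i - (X *ᵥ βstar) i) ^ 2
          + lam * ∑ i, |(D *ᵥ βstar) i|) :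
    lam * ∑ i, |(D *ᵥ βhat) i|
      ≤ 1 / (N : ℝ) * (ε ⬝ᵥ X *ᵥ (βhat - βstar)) + lam * ∑ i, |(D *ᵥ βstar) i| := by
  have hres : ∀ i, (X *ᵥ βstar + ε) i - (X *ᵥ βhat) i = ε i - (X *ᵥ (βhat - βstar)) i := by
    intro i
    simp only [mulVec_sub, Pi.add_apply, Pi.sub_apply]
    ring
  rw [Finset.sum_congr rfl fun i _ => by rw [hres i], sum_sq_sub_eq] at hopt
  simp only [Pi.add_apply, add_sub_cancel_left] at hopt
  have hquad : 0 ≤ 1 / (2 * (N : ℝ)) * ∑ i, (X *ᵥ (βhat - βstar)) i ^ 2 :=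
    mul_nonneg (by positivity) (Finset.sum_nonneg fun i _ => sq_nonneg _)
  have hexpand : ∀ a b c : ℝ,
      1 / (2 * (N : ℝ)) * (a - 2 * b + c) = 1 / (2 * N) * a - 1 / N * b + 1 / (2 * N) * c := by
    intros; ring
  rw [hexpand] at hopt
  linarith

theorem lasso_cone_condition_general (N n m : ℕ)
    (X : Matrix (Fin N) (Fin n) ℝ) (ε : Fin N → ℝ) (βstar : Fin n → ℝ)
    (D : Matrix (Fin (m + n)) (Fin n) ℝ)
    (Dplus : Matrix (Fin n) (Fin (m + n)) ℝ)
    (hDplus : Dplus * D = 1)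
    (S : Finset (Fin (m + n)))
    (hsupp : ∀ i ∉ S, D.mulVec βstar i = 0)
    (lam : ℝ) (hlam0 : 0 < lam)
    (hlam : ∀ j, 2 / (N : ℝ) * |Matrix.vecMul ε (X * Dplus) j| ≤ lam)
    (βhat : Fin n → ℝ)
    (hopt : ∀ β : Fin n → ℝ,
      1 / (2 * (N : ℝ)) * ∑ i, ((X.mulVec βstar + ε) i - X.mulVec βhat i) ^ 2
          + lam * ∑ i, |D.mulVec βhat i|
        ≤ 1 / (2 * (N : ℝ)) * ∑ i, ((X.mulVec βstar + ε) i - X.mulVec β i) ^ 2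
          + lam * ∑ i, |D.mulVec β i|) :
    ∑ i ∈ Sᶜ, |D.mulVec (βhat - βstar) i| ≤ 3 * ∑ i ∈ S, |D.mulVec (βhat - βstar) i| := by
  set u := D *ᵥ (βhat - βstar)
  have hbasic := lasso_basic_inequality X ε D lam βstar βhat (hopt βstar)
  have hcross : 1 / (N : ℝ) * (ε ⬝ᵥ X *ᵥ (βhat - βstar)) ≤ lam / 2 * ∑ i, |u i| := by
    rw [dotProduct_mulVec_eq_of_mul_eq_one X Dplus D hDplus, ← smul_eq_mul, ← smul_dotProduct]
    refine dotProduct_le_mul_sum_abs _ _ fun j => ?_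
    calc _ = 2 / (N : ℝ) * |(ε ᵥ* (X * Dplus)) j| / 2 := by
          rw [Pi.smul_apply, smul_eq_mul, abs_mul, abs_of_nonneg (by positivity)]; ring
      _ ≤ lam / 2 := by linarith [hlam j]
  have hl1 : ∑ i, |(D *ᵥ βstar) i + u i| ≤ 1 / 2 * ∑ i, |u i| + ∑ i, |(D *ᵥ βstar) i| := by
    have hβhat : ∀ i, (D *ᵥ βstar) i + u i = (D *ᵥ βhat) i := fun i => by
      simp only [u, mulVec_sub, Pi.sub_apply, add_sub_cancel]
    simp only [hβhat]
    refine le_of_mul_le_mul_left ?_ hlam0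
    linarith
  exact sum_compl_abs_le_three_mul_of_sum_abs_add_le S _ u hsupp hl1

/-- Cone lemma for generalized-Lasso estimation: if `β̂` minimizes
`(1/(2N))‖y - Xβ‖₂² + λ‖Dβ‖₁` with `y = Xβ* + ε`, `D⁺D = Iₙ`, the support of `Dβ*` contained
in `S`, and `λ ≥ (2/N)‖εᵀXD⁺‖_∞`, then the error `Δ = β̂ - β*` satisfies
`‖(DΔ)_{S^c}‖₁ ≤ 3‖(DΔ)_S‖₁`. -/
theorem lasso_cone_condition (N n m : ℕ) (hN : 0 < N)
    (X : Matrix (Fin N) (Fin n) ℝ) (ε : Fin N → ℝ) (βstar : Fin n → ℝ)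
    (D : Matrix (Fin (m + n)) (Fin n) ℝ)
    (Dplus : Matrix (Fin n) (Fin (m + n)) ℝ)
    (hDplus : Dplus * D = 1)
    (S : Finset (Fin (m + n)))
    (hsupp : ∀ i ∉ S, D.mulVec βstar i = 0)
    (lam : ℝ) (hlam0 : 0 < lam)
    (hlam : ∀ j, 2 / (N : ℝ) * |Matrix.vecMul ε (X * Dplus) j| ≤ lam)
    (βhat : Fin n → ℝ)
    (hopt : ∀ β : Fin n → ℝ,
      1 / (2 * (N : ℝ)) * ∑ i, ((X.mulVec βstar + ε) i - X.mulVec βhat i) ^ 2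
          + lam * ∑ i, |D.mulVec βhat i|
        ≤ 1 / (2 * (N : ℝ)) * ∑ i, ((X.mulVec βstar + ε) i - X.mulVec β i) ^ 2
          + lam * ∑ i, |D.mulVec β i|) :
    ∑ i ∈ Sᶜ, |D.mulVec (βhat - βstar) i| ≤ 3 * ∑ i ∈ S, |D.mulVec (βhat - βstar) i| :=
  lasso_cone_condition_general N n m X ε βstar D Dplus hDplus S hsupp lam hlam0 hlam βhat hopt
end

section
/- Under the cone condition and restricted eigenvalue condition, the Graph-Piecewise-Polynomial-Lasso satisfies: if λ ≥ (2/N)‖εᵀXD⁺‖_∞ and (1/N)‖XD⁺v‖₂² ≥ η‖v‖₂² holds for all v in the cone C = {v : ‖v_{S^c}‖₁ ≤ 3‖v_S‖₁}, then ‖β̂ - β*‖₂ ≤ (3λ_g√((2d)^{k+1}s₁) + 3λ√s₂)/η, where s₁ = |S₁| and s₂ = |S₂|. -/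
/-!
Write `u = β̂ - β*`. Since the combined penalty is `λ‖Dβ‖₁`, the estimator is a generalized Lasso
and the usual argument applies to `v = D u`: comparing the objective at `β̂` and `β*` and bounding
the noise term by `λ/2 ‖v‖₁` puts `v` in the cone `‖v_{Sᶜ}‖₁ ≤ 3‖v_S‖₁`, where the restricted
eigenvalue condition (note `X u = X D⁺ v`) gives `η‖v‖₂² ≤ 3λ‖v_S‖₁`. Finally `‖u‖₂ ≤ ‖v‖₂`, and
`‖v_S‖₁` is bounded through Cauchy–Schwarz on `S₁` and `S₂` together with
`‖Δ^{(k+1)} u‖₂² = uᵀ L^{k+1} u ≤ (2d)^{k+1}‖u‖₂²`, which holds because `0 ≤ L ≤ 2d`.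
-/

open Matrix Finset

namespace Matrix

variable {n : Type*} [Fintype n] {M : Matrix n n ℝ}

lemma PosSemidef.dotProduct_mulVec_self_nonneg (hM : M.PosSemidef) (x : n → ℝ) :
    0 ≤ x ⬝ᵥ M *ᵥ x := by
  simpa using hM.dotProduct_mulVec_nonneg x

lemma IsSymm.dotProduct_mulVec_comm_s15 (hM : M.IsSymm) (x y : n → ℝ) :
    x ⬝ᵥ M *ᵥ y = (M *ᵥ x) ⬝ᵥ y := by
  rw [dotProduct_mulVec, ← mulVec_transpose, hM.eq]

variable [DecidableEq n]

/-- Cauchy–Schwarz for the form of `M` at `x` and `M x`. -/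
lemma PosSemidef.mulVec_dotProduct_mulVec_le (hM : M.PosSemidef) {c : ℝ} (hc : 0 ≤ c)
    (hMc : ∀ x, x ⬝ᵥ M *ᵥ x ≤ c * (x ⬝ᵥ x)) (x : n → ℝ) :
    (M *ᵥ x) ⬝ᵥ (M *ᵥ x) ≤ c * (x ⬝ᵥ M *ᵥ x) := by
  have hsymm := (isHermitian_iff_isSymm.mp hM.isHermitian).dotProduct_mulVec_comm_s15
  have hcs := M.toBilin'.apply_sq_le_of_symm
    (fun y => by simpa only [toBilin'_apply'] using hM.dotProduct_mulVec_self_nonneg y)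
    (LinearMap.isSymm_def.mpr fun y z => by simp [toBilin'_apply', hsymm y, dotProduct_comm])
    x (M *ᵥ x)
  simp only [toBilin'_apply'] at hcs
  rw [hsymm x (M *ᵥ x)] at hcs
  have hx := hM.dotProduct_mulVec_self_nonneg x
  have hq : 0 ≤ (M *ᵥ x) ⬝ᵥ (M *ᵥ x) := by simpa using dotProduct_self_star_nonneg (M *ᵥ x)
  have := mul_le_mul_of_nonneg_left (hMc (M *ᵥ x)) hx
  nlinarith [mul_nonneg hc hx]

lemma PosSemidef.dotProduct_pow_mulVec_le (hM : M.PosSemidef) {c : ℝ} (hc : 0 ≤ c)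
    (hMc : ∀ x, x ⬝ᵥ M *ᵥ x ≤ c * (x ⬝ᵥ x)) (k : ℕ) (x : n → ℝ) :
    x ⬝ᵥ (M ^ k) *ᵥ x ≤ c ^ k * (x ⬝ᵥ x) := by
  induction k using Nat.twoStepInduction generalizing x with
  | zero => simp
  | one => simpa using hMc x
  | more k ih _ =>
    have hsplit : x ⬝ᵥ (M ^ (k + 2)) *ᵥ x = (M *ᵥ x) ⬝ᵥ (M ^ k) *ᵥ (M *ᵥ x) := by
      rw [pow_succ, pow_succ', ← mulVec_mulVec, ← mulVec_mulVec,
        (isHermitian_iff_isSymm.mp hM.isHermitian).dotProduct_mulVec_comm_s15]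
    calc x ⬝ᵥ (M ^ (k + 2)) *ᵥ x ≤ c ^ k * ((M *ᵥ x) ⬝ᵥ (M *ᵥ x)) := hsplit ▸ ih _
      _ ≤ c ^ k * (c * (c * (x ⬝ᵥ x))) := by
        gcongr
        exact (hM.mulVec_dotProduct_mulVec_le hc hMc x).trans (by gcongr; exact hMc x)
      _ = c ^ (k + 2) * (x ⬝ᵥ x) := by ring

end Matrix

namespace SimpleGraph

variable {V : Type*} [Fintype V] (G : SimpleGraph V) [DecidableRel G.Adj]

lemma sum_ite_adj (i : V) (a : ℝ) :
    ∑ j, (if G.Adj i j then a else 0) = G.degree i * a := by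
  rw [G.degree_eq_sum_if_adj (R := ℝ), Finset.sum_mul]
  simp

variable [DecidableEq V]

lemma dotProduct_lapMatrix_mulVec_le (x : V → ℝ) :
    x ⬝ᵥ G.lapMatrix ℝ *ᵥ x ≤ 2 * G.maxDegree * (x ⬝ᵥ x) := by
  have hedge : ∀ i j, (if G.Adj i j then (x i - x j) ^ 2 else 0)
      ≤ (if G.Adj i j then 2 * x i ^ 2 else 0) + (if G.Adj j i then 2 * x j ^ 2 else 0) := by
    intro i j
    simp only [G.adj_comm j i]
    split_ifs <;> nlinarith [sq_nonneg (x i + x j)]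
  calc x ⬝ᵥ G.lapMatrix ℝ *ᵥ x
      = (∑ i, ∑ j, if G.Adj i j then (x i - x j) ^ 2 else 0) / 2 := by
        rw [← toLinearMap₂'_apply', lapMatrix_toLinearMap₂']
    _ ≤ (∑ i, ∑ j, ((if G.Adj i j then 2 * x i ^ 2 else 0)
          + (if G.Adj j i then 2 * x j ^ 2 else 0))) / 2 := by
        gcongr with i _ j _
        exact hedge i j
    _ = ∑ i, G.degree i * (2 * x i ^ 2) := by
        simp only [Finset.sum_add_distrib]
        rw [Finset.sum_comm (f := fun i j => if G.Adj j i then 2 * x j ^ 2 else 0)]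
        simp only [sum_ite_adj]
        ring
    _ ≤ ∑ i, G.maxDegree * (2 * x i ^ 2) := by
        gcongr with i
        exact_mod_cast G.degree_le_maxDegree i
    _ = 2 * G.maxDegree * (x ⬝ᵥ x) := by
        simp only [dotProduct, Finset.mul_sum]
        ring_nf

lemma dotProduct_lapMatrix_pow_mulVec_le (k : ℕ) (x : V → ℝ) :
    x ⬝ᵥ (G.lapMatrix ℝ ^ k) *ᵥ x ≤ (2 * G.maxDegree) ^ k * (x ⬝ᵥ x) :=
  (G.posSemidef_lapMatrix ℝ).dotProduct_pow_mulVec_le (by positivity)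
    G.dotProduct_lapMatrix_mulVec_le k x

lemma sum_mulVec_sq_le_of_transpose_mul_eq_lapMatrix_pow {m : Type*} [Fintype m]
    {A : Matrix m V ℝ} {k : ℕ} (hA : Aᵀ * A = G.lapMatrix ℝ ^ k) (x : V → ℝ) :
    ∑ i, (A *ᵥ x) i ^ 2 ≤ (2 * G.maxDegree) ^ k * ∑ i, x i ^ 2 := by
  have h := G.dotProduct_lapMatrix_pow_mulVec_le k x
  rw [← hA, ← mulVec_mulVec, dotProduct_mulVec, vecMul_transpose] at h
  simpa only [dotProduct, sq] using h

end SimpleGraph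

section GeneralizedLasso

variable {ι : Type*} [Fintype ι]

lemma sum_abs_le_sqrt_card_mul_sqrt_sum_sq (s : Finset ι) (f : ι → ℝ) :
    ∑ i ∈ s, |f i| ≤ √(#s) * √(∑ i, f i ^ 2) := by
  rw [← Real.sqrt_mul (Nat.cast_nonneg (α := ℝ) #s)]
  apply Real.le_sqrt_of_sq_le
  calc (∑ i ∈ s, |f i|) ^ 2 ≤ #s * ∑ i ∈ s, |f i| ^ 2 := sq_sum_le_card_mul_sum_sq
    _ ≤ #s * ∑ i, f i ^ 2 := by
      simp only [sq_abs]
      gcongr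
      exact subset_univ s

lemma dotProduct_le_mul_sum_abs_s15 {z : ι → ℝ} {c : ℝ} (hz : ∀ j, |z j| ≤ c) (v : ι → ℝ) :
    z ⬝ᵥ v ≤ c * ∑ j, |v j| := by
  rw [dotProduct, mul_sum]
  refine sum_le_sum fun j _ => ?_
  calc z j * v j ≤ |z j| * |v j| := by rw [← abs_mul]; exact le_abs_self _
    _ ≤ c * |v j| := by gcongr; exact hz j

lemma sum_abs_sub_sum_abs_le [DecidableEq ι] {s : Finset ι} {a : ι → ℝ}
    (ha : ∀ i ∉ s, a i = 0) (b : ι → ℝ) :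
    ∑ i, |a i| - ∑ i, |b i| ≤ ∑ i ∈ s, |(b - a) i| - ∑ i ∈ sᶜ, |(b - a) i| := by
  simp only [Pi.sub_apply]
  rw [← sum_sub_distrib, ← sum_add_sum_compl s, sub_eq_add_neg (∑ i ∈ s, _), ← sum_neg_distrib]
  gcongr with i _ i hi
  · rw [abs_sub_comm]
    exact abs_sub_abs_le_abs_sub _ _
  · simp [ha i (mem_compl.mp hi)]

variable {r p : Type*} [Fintype r] [Fintype p]

noncomputable def generalizedLassoObjective (X : Matrix r p ℝ) (D : Matrix ι p ℝ) (y : r → ℝ)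
    (N lam : ℝ) (β : p → ℝ) : ℝ :=
  1 / (2 * N) * ∑ i, (y i - (X *ᵥ β) i) ^ 2 + lam * ∑ i, |(D *ᵥ β) i|

lemma generalizedLasso_basic_inequality {X : Matrix r p ℝ} {D : Matrix ι p ℝ} {ε : r → ℝ}
    {N lam : ℝ} {βstar βhat : p → ℝ}
    (hopt : generalizedLassoObjective X D (X *ᵥ βstar + ε) N lam βhat
      ≤ generalizedLassoObjective X D (X *ᵥ βstar + ε) N lam βstar) :
    1 / (2 * N) * ∑ i, (X *ᵥ (βhat - βstar)) i ^ 2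
      ≤ 1 / N * (ε ⬝ᵥ X *ᵥ (βhat - βstar))
        + lam * (∑ i, |(D *ᵥ βstar) i| - ∑ i, |(D *ᵥ βhat) i|) := by
  have hres : ∀ i, (X *ᵥ βstar + ε) i - (X *ᵥ βhat) i = ε i - (X *ᵥ (βhat - βstar)) i := by
    intro i
    simp only [mulVec_sub, Pi.add_apply, Pi.sub_apply]
    ring
  simp only [generalizedLassoObjective, hres] at hopt
  simp only [Pi.add_apply, add_sub_cancel_left, sub_sq, sum_add_distrib, sum_sub_distrib] at hopt
  have hcross : ∑ i, 2 * ε i * (X *ᵥ (βhat - βstar)) i = 2 * (ε ⬝ᵥ X *ᵥ (βhat - βstar)) := by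
    simp only [dotProduct, mul_sum, mul_assoc]
  have hhalf : 1 / N = 2 * (1 / (2 * N)) := by ring
  rw [hcross] at hopt
  rw [hhalf]
  linarith

theorem generalizedLasso_restricted_eigenvalue_bound [DecidableEq ι] [DecidableEq p]
    {X : Matrix r p ℝ} {D : Matrix ι p ℝ} {Dplus : Matrix p ι ℝ} (hDplus : Dplus * D = 1)
    {ε : r → ℝ} {N lam η : ℝ} (hN : 0 ≤ N) (hlam : 0 < lam) {S : Finset ι} {βstar βhat : p → ℝ}
    (hS : ∀ i ∉ S, (D *ᵥ βstar) i = 0)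
    (hnoise : ∀ j, 2 / N * |(ε ᵥ* (X * Dplus)) j| ≤ lam)
    (hRE : ∀ v : ι → ℝ, ∑ i ∈ Sᶜ, |v i| ≤ 3 * ∑ i ∈ S, |v i| →
      η * ∑ i, v i ^ 2 ≤ 1 / N * ∑ j, ((X * Dplus) *ᵥ v) j ^ 2)
    (hopt : generalizedLassoObjective X D (X *ᵥ βstar + ε) N lam βhat
      ≤ generalizedLassoObjective X D (X *ᵥ βstar + ε) N lam βstar) :
    η * ∑ i, (D *ᵥ (βhat - βstar)) i ^ 2 ≤ 3 * lam * ∑ i ∈ S, |(D *ᵥ (βhat - βstar)) i| := by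
  set v := D *ᵥ (βhat - βstar) with hv
  have hXu : X *ᵥ (βhat - βstar) = (X * Dplus) *ᵥ v := by
    rw [hv, mulVec_mulVec, Matrix.mul_assoc, hDplus, Matrix.mul_one]
  have hnoise' : 1 / N * (ε ⬝ᵥ (X * Dplus) *ᵥ v) ≤ lam / 2 * ∑ i, |v i| := by
    rw [dotProduct_mulVec, ← smul_eq_mul, ← smul_dotProduct]
    refine dotProduct_le_mul_sum_abs_s15 (fun j => ?_) v
    rw [Pi.smul_apply, smul_eq_mul, abs_mul, abs_of_nonneg (by positivity)]
    have htwo : 2 / N * |(ε ᵥ* (X * Dplus)) j| = 2 * (1 / N * |(ε ᵥ* (X * Dplus)) j|) := by ring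
    linarith [hnoise j]
  have hpen := sum_abs_sub_sum_abs_le hS (D *ᵥ βhat)
  rw [← mulVec_sub, ← hv] at hpen
  have hbasic := generalizedLasso_basic_inequality hopt
  rw [hXu] at hbasic
  rw [← sum_add_sum_compl S] at hnoise'
  set a := ∑ i ∈ S, |v i|
  set b := ∑ i ∈ Sᶜ, |v i|
  have hfit : 1 / (2 * N) * ∑ i, ((X * Dplus) *ᵥ v) i ^ 2 ≤ lam * (3 * a - b) / 2 := by
    linarith [mul_le_mul_of_nonneg_left hpen hlam.le]
  have hcone : b ≤ 3 * a := by
    have hfit0 : 0 ≤ 1 / (2 * N) * ∑ i, ((X * Dplus) *ᵥ v) i ^ 2 := by positivity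
    have h := (mul_nonneg_iff_of_pos_left hlam).mp (by linarith : 0 ≤ lam * (3 * a - b))
    linarith
  have hb : 0 ≤ lam * b := mul_nonneg hlam.le (sum_nonneg fun i _ => abs_nonneg (v i))
  have hre := hRE v hcone
  rw [show 1 / N = 2 * (1 / (2 * N)) by ring] at hre
  linarith

end GeneralizedLasso

lemma le_div_of_mul_sq_le_mul {η a t : ℝ} (hη : 0 < η) (ha : 0 ≤ a) (ht : 0 ≤ t)
    (h : η * t ^ 2 ≤ a * t) : t ≤ a / η := by
  rw [le_div_iff₀ hη]
  rcases ht.eq_or_lt with rfl | ht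
  · simpa using ha
  · nlinarith

section StackedPenalty

variable {m n : Type*} [Fintype n] [DecidableEq n] (A : Matrix m n ℝ) (x : n → ℝ)

lemma fromRows_smul_one_mulVec_inl (c : ℝ) (i : m) :
    (fromRows (c • A) (1 : Matrix n n ℝ) *ᵥ x) (Sum.inl i) = c * (A *ᵥ x) i := by
  simp [fromRows_mulVec, smul_mulVec]

lemma fromRows_smul_one_mulVec_inr (c : ℝ) (i : n) :
    (fromRows (c • A) (1 : Matrix n n ℝ) *ᵥ x) (Sum.inr i) = x i := by
  simp [fromRows_mulVec]

lemma fromRows_smul_one_mulVec_eq_zero {s : Finset m} {t : Finset n}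
    (hs : ∀ i ∉ s, (A *ᵥ x) i = 0) (ht : ∀ i ∉ t, x i = 0) (c : ℝ) :
    ∀ i ∉ s.disjSum t, (fromRows (c • A) (1 : Matrix n n ℝ) *ᵥ x) i = 0
  | .inl i, hi => by
    rw [fromRows_smul_one_mulVec_inl, hs i (by simpa using hi), mul_zero]
  | .inr i, hi => by
    rw [fromRows_smul_one_mulVec_inr, ht i (by simpa using hi)]

lemma sum_disjSum_abs_fromRows_smul_one_mulVec {c : ℝ} (hc : 0 ≤ c) (s : Finset m)
    (t : Finset n) :
    ∑ i ∈ s.disjSum t, |(fromRows (c • A) (1 : Matrix n n ℝ) *ᵥ x) i|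
      = c * ∑ i ∈ s, |(A *ᵥ x) i| + ∑ i ∈ t, |x i| := by
  simp only [sum_disjSum, fromRows_smul_one_mulVec_inl, fromRows_smul_one_mulVec_inr, abs_mul,
    abs_of_nonneg hc, mul_sum]

variable [Fintype m] {lam lamg : ℝ}

lemma mul_sum_abs_fromRows_div_smul_one_mulVec (hlam : 0 < lam) (hlamg : 0 ≤ lamg) :
    lam * ∑ i, |(fromRows ((lamg / lam) • A) (1 : Matrix n n ℝ) *ᵥ x) i|
      = lamg * ∑ i, |(A *ᵥ x) i| + lam * ∑ i, |x i| := by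
  rw [← univ_disjSum_univ, sum_disjSum_abs_fromRows_smul_one_mulVec _ _ (by positivity), mul_add,
    ← mul_assoc, mul_div_cancel₀ _ hlam.ne']

lemma sqrt_sum_sq_le_of_restricted_eigenvalue_bound (hlam : 0 < lam) (hlamg : 0 ≤ lamg)
    {η C : ℝ} (hη : 0 < η) {s : Finset m} {t : Finset n}
    (hAx : ∑ i, (A *ᵥ x) i ^ 2 ≤ C * ∑ i, x i ^ 2)
    (hRE : η * ∑ i, (fromRows ((lamg / lam) • A) (1 : Matrix n n ℝ) *ᵥ x) i ^ 2
      ≤ 3 * lam * ∑ i ∈ s.disjSum t, |(fromRows ((lamg / lam) • A) (1 : Matrix n n ℝ) *ᵥ x) i|) :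
    √(∑ i, x i ^ 2) ≤ (3 * lamg * √(C * #s) + 3 * lam * √(#t)) / η := by
  have hx : ∑ i, x i ^ 2 ≤ ∑ i, (fromRows ((lamg / lam) • A) (1 : Matrix n n ℝ) *ᵥ x) i ^ 2 := by
    simp only [Fintype.sum_sum_type, fromRows_smul_one_mulVec_inr, le_add_iff_nonneg_left]
    positivity
  have hs : ∑ i ∈ s, |(A *ᵥ x) i| ≤ √(C * #s) * √(∑ i, x i ^ 2) :=
    calc ∑ i ∈ s, |(A *ᵥ x) i| ≤ √(#s) * √(∑ i, (A *ᵥ x) i ^ 2) :=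
          sum_abs_le_sqrt_card_mul_sqrt_sum_sq s _
      _ ≤ √(#s) * √(C * ∑ i, x i ^ 2) := by gcongr
      _ = √(C * #s) * √(∑ i, x i ^ 2) := by
        rw [Real.sqrt_mul' _ (by positivity), Real.sqrt_mul' _ (by positivity)]
        ring
  have ht := sum_abs_le_sqrt_card_mul_sqrt_sum_sq t x
  rw [sum_disjSum_abs_fromRows_smul_one_mulVec _ _ (by positivity)] at hRE
  apply le_div_of_mul_sq_le_mul hη (by positivity) (Real.sqrt_nonneg _)
  rw [Real.sq_sqrt (by positivity)]
  calc η * ∑ i, x i ^ 2 ≤ 3 * lam * (lamg / lam * ∑ i ∈ s, |(A *ᵥ x) i| + ∑ i ∈ t, |x i|) :=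
        (mul_le_mul_of_nonneg_left hx hη.le).trans hRE
    _ = 3 * lamg * ∑ i ∈ s, |(A *ᵥ x) i| + 3 * lam * ∑ i ∈ t, |x i| := by
        field_simp
    _ ≤ 3 * lamg * (√(C * #s) * √(∑ i, x i ^ 2)) + 3 * lam * (√(#t) * √(∑ i, x i ^ 2)) :=
        add_le_add (mul_le_mul_of_nonneg_left hs (by positivity))
          (mul_le_mul_of_nonneg_left ht (by positivity))
    _ = (3 * lamg * √(C * #s) + 3 * lam * √(#t)) * √(∑ i, x i ^ 2) := by ring

end StackedPenalty

theorem gppl_l2_error_bound_general (N n m k : ℕ)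
    (G : SimpleGraph (Fin n)) [DecidableRel G.Adj]
    (Δop : Matrix (Fin m) (Fin n) ℝ)
    (hΔ : Δopᵀ * Δop = (G.lapMatrix ℝ) ^ (k + 1))
    (X : Matrix (Fin N) (Fin n) ℝ) (ε : Fin N → ℝ) (βstar : Fin n → ℝ)
    (lam lamg η : ℝ) (hlam0 : 0 < lam) (hlamg0 : 0 < lamg) (hη : 0 < η)
    (D : Matrix (Fin m ⊕ Fin n) (Fin n) ℝ)
    (hD : D = Matrix.fromRows ((lamg / lam) • Δop) (1 : Matrix (Fin n) (Fin n) ℝ))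
    (Dplus : Matrix (Fin n) (Fin m ⊕ Fin n) ℝ) (hDplus : Dplus * D = 1)
    (S1 : Finset (Fin m)) (hS1 : ∀ i, i ∈ S1 ↔ Δop.mulVec βstar i ≠ 0)
    (S2 : Finset (Fin n)) (hS2 : ∀ i, i ∈ S2 ↔ βstar i ≠ 0)
    (S : Finset (Fin m ⊕ Fin n))
    (hS : S = S1.map ⟨Sum.inl, Sum.inl_injective⟩ ∪ S2.map ⟨Sum.inr, Sum.inr_injective⟩)
    (hRE : ∀ v : Fin m ⊕ Fin n → ℝ,
      (∑ i ∈ Sᶜ, |v i|) ≤ 3 * ∑ i ∈ S, |v i| →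
      η * ∑ i, v i ^ 2 ≤ 1 / (N : ℝ) * ∑ j, (X * Dplus).mulVec v j ^ 2)
    (hlam : ∀ j, 2 / (N : ℝ) * |Matrix.vecMul ε (X * Dplus) j| ≤ lam)
    (βhat : Fin n → ℝ)
    (hopt : ∀ β : Fin n → ℝ,
      1 / (2 * (N : ℝ)) * ∑ i, ((X.mulVec βstar + ε) i - X.mulVec βhat i) ^ 2
          + lamg * ∑ i, |Δop.mulVec βhat i| + lam * ∑ i, |βhat i|
        ≤ 1 / (2 * (N : ℝ)) * ∑ i, ((X.mulVec βstar + ε) i - X.mulVec β i) ^ 2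
          + lamg * ∑ i, |Δop.mulVec β i| + lam * ∑ i, |β i|) :
    Real.sqrt (∑ i, (βhat i - βstar i) ^ 2)
      ≤ (3 * lamg * Real.sqrt ((2 * (G.maxDegree : ℝ)) ^ (k + 1) * S1.card)
          + 3 * lam * Real.sqrt (S2.card)) / η := by
  have hSdisj : S = S1.disjSum S2 := by ext (i | i) <;> simp [hS]
  subst hD hSdisj
  have hsupp := fromRows_smul_one_mulVec_eq_zero Δop βstar
    (fun i hi => not_not.mp (mt (hS1 i).mpr hi)) (fun i hi => not_not.mp (mt (hS2 i).mpr hi))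
    (lamg / lam)
  have hbound := generalizedLasso_restricted_eigenvalue_bound hDplus (Nat.cast_nonneg N) hlam0
    hsupp hlam hRE (by
      simpa only [generalizedLassoObjective, add_assoc,
        mul_sum_abs_fromRows_div_smul_one_mulVec _ _ hlam0 hlamg0.le] using hopt βstar)
  exact sqrt_sum_sq_le_of_restricted_eigenvalue_bound Δop _ hlam0 hlamg0.le hη
    (G.sum_mulVec_sq_le_of_transpose_mul_eq_lapMatrix_pow hΔ _) hbound

/-- ℓ₂-error bound for the Graph-Piecewise-Polynomial-Lasso (Theorem: fixed design, part (a)).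
The estimator `β̂` minimizes `(1/(2N))‖y - Xβ‖₂² + λ_g‖Δ^{(k+1)}β‖₁ + λ‖β‖₁`, where
`Δ^{(k+1)}` is the order-`(k+1)` graph difference operator of a graph with maximum degree `d`
(so `(Δ^{(k+1)})ᵀΔ^{(k+1)} = L^{k+1}`).  If `λ ≥ (2/N)‖εᵀXD⁺‖_∞` and the restricted
eigenvalue condition `(1/N)‖XD⁺v‖₂² ≥ η‖v‖₂²` holds on the cone
`C = {v : ‖v_{S^c}‖₁ ≤ 3‖v_S‖₁}` (with `S = S₁ ∪ {m+i : i ∈ S₂}` built from the supports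
`S₁` of `Δ^{(k+1)}β*` and `S₂` of `β*`), then
`‖β̂ - β*‖₂ ≤ (3λ_g√((2d)^{k+1}s₁) + 3λ√s₂)/η` with `s₁ = |S₁|`, `s₂ = |S₂|`. -/
theorem gppl_l2_error_bound (N n m k : ℕ) (hN : 0 < N)
    (G : SimpleGraph (Fin n)) [DecidableRel G.Adj]
    (Δop : Matrix (Fin m) (Fin n) ℝ)
    (hΔ : Δopᵀ * Δop = (G.lapMatrix ℝ) ^ (k + 1))
    (X : Matrix (Fin N) (Fin n) ℝ) (ε : Fin N → ℝ) (βstar : Fin n → ℝ)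
    (lam lamg η : ℝ) (hlam0 : 0 < lam) (hlamg0 : 0 < lamg) (hη : 0 < η)
    (D : Matrix (Fin m ⊕ Fin n) (Fin n) ℝ)
    (hD : D = Matrix.fromRows ((lamg / lam) • Δop) (1 : Matrix (Fin n) (Fin n) ℝ))
    (Dplus : Matrix (Fin n) (Fin m ⊕ Fin n) ℝ) (hDplus : Dplus * D = 1)
    (S1 : Finset (Fin m)) (hS1 : ∀ i, i ∈ S1 ↔ Δop.mulVec βstar i ≠ 0)
    (S2 : Finset (Fin n)) (hS2 : ∀ i, i ∈ S2 ↔ βstar i ≠ 0)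
    (S : Finset (Fin m ⊕ Fin n))
    (hS : S = S1.map ⟨Sum.inl, Sum.inl_injective⟩ ∪ S2.map ⟨Sum.inr, Sum.inr_injective⟩)
    (hRE : ∀ v : Fin m ⊕ Fin n → ℝ,
      (∑ i ∈ Sᶜ, |v i|) ≤ 3 * ∑ i ∈ S, |v i| →
      η * ∑ i, v i ^ 2 ≤ 1 / (N : ℝ) * ∑ j, (X * Dplus).mulVec v j ^ 2)
    (hlam : ∀ j, 2 / (N : ℝ) * |Matrix.vecMul ε (X * Dplus) j| ≤ lam)
    (βhat : Fin n → ℝ)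
    (hopt : ∀ β : Fin n → ℝ,
      1 / (2 * (N : ℝ)) * ∑ i, ((X.mulVec βstar + ε) i - X.mulVec βhat i) ^ 2
          + lamg * ∑ i, |Δop.mulVec βhat i| + lam * ∑ i, |βhat i|
        ≤ 1 / (2 * (N : ℝ)) * ∑ i, ((X.mulVec βstar + ε) i - X.mulVec β i) ^ 2
          + lamg * ∑ i, |Δop.mulVec β i| + lam * ∑ i, |β i|) :
    Real.sqrt (∑ i, (βhat i - βstar i) ^ 2)
      ≤ (3 * lamg * Real.sqrt ((2 * (G.maxDegree : ℝ)) ^ (k + 1) * S1.card)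
          + 3 * lam * Real.sqrt (S2.card)) / η :=
  gppl_l2_error_bound_general N n m k G Δop hΔ X ε βstar lam lamg η hlam0 hlamg0 hη D hD Dplus
    hDplus S1 hS1 S2 hS2 S hS hRE hlam βhat hopt
end

section
/- Let G be a connected undirected graph with Laplacian L and F_{-S} the incidence matrix with rows indexed by S removed, inducing a subgraph with connected components C₁,...,C_j. Then for even k, the null space of F_{-S} L^{k/2} equals span(𝟙ₙ) + (span(𝟙ₙ)^⊥ ∩ (L^{k/2} + 𝟙ₙ𝟙ₙᵀ)^{-1} span(𝟙_{C₁},...,𝟙_{C_j})), where 𝟙ₙ is the all-ones vector and 𝟙_{C_i} the indicator vector of component C_i. -/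
open Matrix

/-!
Row `e` of the incidence matrix maps `w` to `w (b e) - w (a e)`, so `x` lies in the null space of
`F_{-S} L^t` iff `L^t x` is constant on the components of the subgraph left after deleting `S`.
Split `x = c𝟙 + u` with `∑ u = 0`: then `𝟙𝟙ᵀu = 0` and `L^t 𝟙` is constant (it is `𝟙` for
`t = 0` and `0` otherwise), so `(L^t + 𝟙𝟙ᵀ) u` differs from `L^t x` by a constant vector.
-/

theorem incidence_mulVec_apply {ι V R : Type*} [Fintype V] [DecidableEq V] [Ring R]
    (F : Matrix ι V R) (a b : ι → V) (hab : ∀ e, a e ≠ b e)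
    (hF : ∀ e l, F e l = if l = a e then -1 else if l = b e then 1 else 0)
    (w : V → R) (e : ι) : (F *ᵥ w) e = w (b e) - w (a e) := by
  have hrow : F e = Pi.single (b e) 1 - Pi.single (a e) 1 := by
    ext l
    rw [hF]
    by_cases hla : l = a e
    · simp [hla, hab e]
    · by_cases hlb : l = b e <;> simp [hla, hlb, (hab e).symm]
  rw [mulVec, hrow, sub_dotProduct, single_dotProduct, single_dotProduct, one_mul, one_mul]

theorem incidence_submatrix_mulVec_eq_zero_iff {ι V R : Type*} [Fintype V] [DecidableEq V]
    [Ring R] (F : Matrix ι V R) (a b : ι → V) (hab : ∀ e, a e ≠ b e)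
    (hF : ∀ e l, F e l = if l = a e then -1 else if l = b e then 1 else 0)
    (keep : ι → Prop) (w : V → R) :
    F.submatrix (Subtype.val : {e // keep e} → ι) id *ᵥ w = 0 ↔ ∀ e, keep e → w (a e) = w (b e) := by
  simp only [funext_iff, Subtype.forall, Pi.zero_apply]
  refine forall₂_congr fun e he => ?_
  rw [show (F.submatrix Subtype.val id *ᵥ w) ⟨e, he⟩ = (F *ᵥ w) e from rfl,
    incidence_mulVec_apply F a b hab hF w e, sub_eq_zero, eq_comm]

theorem SimpleGraph.forall_reachable_fromRel_imp_eq_iff {V α : Type*} (r : V → V → Prop)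
    (w : V → α) :
    (∀ i j, (fromRel r).Reachable i j → w i = w j) ↔ ∀ i j, r i j → w i = w j := by
  refine ⟨fun h i j hr => ?_, fun h i j hr => ?_⟩
  · by_cases hij : i = j
    · rw [hij]
    · exact h i j (Adj.reachable ((fromRel_adj r i j).2 ⟨hij, .inl hr⟩))
  · obtain ⟨q⟩ := hr
    induction q with
    | nil => rfl
    | cons hadj _ ih =>
      obtain ⟨-, hr | hr⟩ := (fromRel_adj r _ _).1 hadj
      exacts [(h _ _ hr).trans ih, (h _ _ hr).symm.trans ih]

theorem sum_sub_mean_eq_zero {ι K : Type*} [Fintype ι] [Field K] [CharZero K] (x : ι → K) :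
    ∑ i, (x i - (∑ j, x j) / Fintype.card ι) = 0 := by
  rcases isEmpty_or_nonempty ι with hι | hι
  · simp
  · rw [Finset.sum_sub_distrib, Finset.sum_const, Finset.card_univ, nsmul_eq_mul,
      mul_div_cancel₀ _ (Nat.cast_ne_zero.2 Fintype.card_ne_zero), sub_self]

namespace SimpleGraph

variable {V R : Type*} [Fintype V] [DecidableEq V] [CommRing R] (G : SimpleGraph V)
  [DecidableRel G.Adj]

-- `0 ^ 0 = 1` covers `t = 0`, where `L ^ t = 1`.
theorem lapMatrix_pow_mulVec_const (t : ℕ) (c : R) :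
    G.lapMatrix R ^ t *ᵥ (fun _ => c) = fun _ => 0 ^ t * c := by
  cases t with
  | zero => simp
  | succ t =>
    have hL : G.lapMatrix R *ᵥ (fun _ => c) = 0 := by
      rw [show (fun _ : V => c) = c • fun _ => (1 : R) by ext; simp, mulVec_smul,
        lapMatrix_mulVec_const_eq_zero, smul_zero]
    ext
    rw [pow_succ, ← mulVec_mulVec, hL, mulVec_zero]
    simp

theorem lapMatrix_pow_add_allOnes_mulVec {t : ℕ} {u : V → R} (hu : ∑ i, u i = 0) (c : R) :
    (G.lapMatrix R ^ t + of fun _ _ => 1) *ᵥ u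
      = G.lapMatrix R ^ t *ᵥ ((fun _ => c) + u) - fun _ => 0 ^ t * c := by
  have hJ : (of fun _ _ : V => (1 : R)) *ᵥ u = 0 := by
    ext; simp [mulVec, dotProduct, hu]
  rw [add_mulVec, hJ, mulVec_add, lapMatrix_pow_mulVec_const]
  abel

end SimpleGraph

open SimpleGraph in
theorem nullspace_of_reduced_incidence_times_lap_pow_general (n p t : ℕ)
    (G : SimpleGraph (Fin n)) [DecidableRel G.Adj]
    (a b : Fin p → Fin n)
    (hab : ∀ kk, a kk < b kk)
    (F : Matrix (Fin p) (Fin n) ℝ)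
    (hF : ∀ kk l, F kk l = if l = a kk then -1 else if l = b kk then 1 else 0)
    (S : Finset (Fin p)) :
    ∀ x : Fin n → ℝ,
      (F.submatrix (Subtype.val : {kk : Fin p // kk ∉ S} → Fin p) id
          * (G.lapMatrix ℝ) ^ t).mulVec x = 0
        ↔ ∃ (c : ℝ) (u : Fin n → ℝ),
            (∑ i, u i = 0)
            ∧ (∀ i j : Fin n,
                (SimpleGraph.fromRel
                    (fun i j : Fin n => ∃ kk : Fin p, kk ∉ S ∧ a kk = i ∧ b kk = j)).Reachable i j →
                ((G.lapMatrix ℝ ^ t + Matrix.of fun _ _ : Fin n => (1 : ℝ)).mulVec u) i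
                  = ((G.lapMatrix ℝ ^ t + Matrix.of fun _ _ : Fin n => (1 : ℝ)).mulVec u) j)
            ∧ x = (fun _ => c) + u := by
  intro x
  set r := fun i j : Fin n => ∃ kk : Fin p, kk ∉ S ∧ a kk = i ∧ b kk = j
  have hedges (w : Fin n → ℝ) :
      (∀ e, e ∉ S → w (a e) = w (b e)) ↔ ∀ i j, (fromRel r).Reachable i j → w i = w j := by
    rw [forall_reachable_fromRel_imp_eq_iff]
    exact ⟨fun h _ _ ⟨e, he, hi, hj⟩ => hi ▸ hj ▸ h e he, fun h e he => h _ _ ⟨e, he, rfl, rfl⟩⟩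
  rw [← mulVec_mulVec, incidence_submatrix_mulVec_eq_zero_iff F a b (fun e => (hab e).ne) hF
    (· ∉ S), hedges]
  constructor
  · intro hx
    have hu : ∑ i, (x - fun _ => (∑ j, x j) / n : Fin n → ℝ) i = 0 := by
      simpa using sum_sub_mean_eq_zero x
    refine ⟨_, _, hu, fun i j hij => ?_, (add_sub_cancel _ x).symm⟩
    rw [lapMatrix_pow_add_allOnes_mulVec G hu ((∑ j, x j) / n), add_sub_cancel]
    simp [hx i j hij]
  · rintro ⟨c, u, hu, hconst, rfl⟩ i j hij
    simpa [lapMatrix_pow_add_allOnes_mulVec G hu c] using hconst i j hij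

/-- Null space structure (even order case).  Let `G` be a connected graph with oriented
incidence matrix `F` and Laplacian `L`, and let `F_{-S}` be `F` with the rows indexed by `S`
removed; removing the corresponding edges yields a subgraph `G'` whose connected components
are `C₁, …, C_j`.  Then, for even order `k = 2t`, the null space of `F_{-S} L^{k/2}` is
`span(𝟙ₙ) + (span(𝟙ₙ)^⊥ ∩ (L^{k/2} + 𝟙ₙ𝟙ₙᵀ)^{-1} span(𝟙_{C₁}, …, 𝟙_{C_j}))`:
`x` is in the null space iff `x = c𝟙ₙ + u` with `𝟙ₙᵀu = 0` and `(L^{k/2} + 𝟙ₙ𝟙ₙᵀ)u`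
constant on each connected component of `G'`. -/
theorem nullspace_of_reduced_incidence_times_lap_pow (n p t : ℕ) (hn : 0 < n)
    (G : SimpleGraph (Fin n)) [DecidableRel G.Adj] (hconn : G.Connected)
    (a b : Fin p → Fin n)
    (hab : ∀ kk, a kk < b kk)
    (hadj : ∀ kk, G.Adj (a kk) (b kk))
    (hbij : ∀ i j : Fin n, G.Adj i j → i < j → ∃! kk : Fin p, a kk = i ∧ b kk = j)
    (F : Matrix (Fin p) (Fin n) ℝ)
    (hF : ∀ kk l, F kk l = if l = a kk then -1 else if l = b kk then 1 else 0)
    (S : Finset (Fin p)) :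
    ∀ x : Fin n → ℝ,
      (F.submatrix (Subtype.val : {kk : Fin p // kk ∉ S} → Fin p) id
          * (G.lapMatrix ℝ) ^ t).mulVec x = 0
        ↔ ∃ (c : ℝ) (u : Fin n → ℝ),
            (∑ i, u i = 0)
            ∧ (∀ i j : Fin n,
                (SimpleGraph.fromRel
                    (fun i j : Fin n => ∃ kk : Fin p, kk ∉ S ∧ a kk = i ∧ b kk = j)).Reachable i j →
                ((G.lapMatrix ℝ ^ t + Matrix.of fun _ _ : Fin n => (1 : ℝ)).mulVec u) i
                  = ((G.lapMatrix ℝ ^ t + Matrix.of fun _ _ : Fin n => (1 : ℝ)).mulVec u) j)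
            ∧ x = (fun _ => c) + u :=
  nullspace_of_reduced_incidence_times_lap_pow_general n p t G a b hab F hF S
end
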